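/- arXiv:1604.06905 — 9 statements merged into one kernel-verified Lean document; each statement's English description precedes it below -/
import Mathlib

section
/- Let R be an integral domain with involution, and let (H, ρ, s) and (H', ρ', s') be pointed skew-Hermitian R-modules: (H, ρ) and (H', ρ') are skew-Hermitian R-modules and s ∈ Q ⊗_R H, s' ∈ Q ⊗_R H' (Q the fraction field of R) satisfy ρ(s,s) = 0, ρ(s,H) ⊆ R, ρ'(s',s') = 0, ρ'(s',H') ⊆ R. Define the twisted sum form on H ⊕ H' by (ρ ⊕_{s,s'} ρ')(h₁+h₁', h₂+h₂') = ρ(h₁,h₂) + ρ'(h₁',h₂') + ρ(h₁,s)ρ'(s',h₂') − ρ(s,h₂)ρ'(h₁',s'). Then this form is sesquilinear, skew-symmetric, and non-degenerate on H ⊕ H'. -/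
open TensorProduct

/-- A skew-Hermitian form on an `R`-module `H`, relative to an involution `σ` of `R`. -/
structure SHForm (R : Type) [CommRing R] (σ : R →+* R)
    (H : Type) [AddCommGroup H] [Module R H] : Type where
  form : H → H → R
  add_left : ∀ x x' y, form (x + x') y = form x y + form x' y
  smul_left : ∀ (r : R) (x y : H), form (r • x) y = r * form x y
  add_right : ∀ x y y', form x (y + y') = form x y + form x y'
  smul_right : ∀ (r : R) (x y : H), form x (r • y) = σ r * form x y
  skew : ∀ x y, form x y = - σ (form y x)
  nondeg : ∀ x, (∀ y, form x y = 0) → x = 0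

/-- A skew-Hermitian form together with its extension to the rationalization `Q ⊗[R] H`. -/
structure SHFormQ (R : Type) [CommRing R] (σ : R →+* R)
    (Q : Type) [CommRing Q] [Algebra R Q] (σQ : Q →+* Q)
    (H : Type) [AddCommGroup H] [Module R H] extends SHForm R σ H where
  formQ : Q ⊗[R] H → Q ⊗[R] H → Q
  formQ_add_left : ∀ x x' y, formQ (x + x') y = formQ x y + formQ x' y
  formQ_smul_left : ∀ (q : Q) x y, formQ (q • x) y = q * formQ x y
  formQ_add_right : ∀ x y y', formQ x (y + y') = formQ x y + formQ x y'
  formQ_smul_right : ∀ (q : Q) x y, formQ x (q • y) = σQ q * formQ x y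
  formQ_skew : ∀ x y, formQ x y = - σQ (formQ y x)
  formQ_compat : ∀ x y : H,
    formQ ((1 : Q) ⊗ₜ[R] x) ((1 : Q) ⊗ₜ[R] y) = algebraMap R Q (form x y)

/-- A pointed skew-Hermitian module: a distinguished element `pt` of the rationalization
with `ρ(pt, pt) = 0` and `ρ(pt, H) ⊆ R`. -/
structure PointedSH (R : Type) [CommRing R] (σ : R →+* R)
    (Q : Type) [CommRing Q] [Algebra R Q] (σQ : Q →+* Q)
    (H : Type) [AddCommGroup H] [Module R H] extends SHFormQ R σ Q σQ H where
  pt : Q ⊗[R] H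
  pt_isotropic : formQ pt pt = 0
  pt_integral : ∀ x : H, ∃ r : R, formQ pt ((1 : Q) ⊗ₜ[R] x) = algebraMap R Q r

section Helpers

variable {R : Type} [CommRing R] {σ : R →+* R}
    {Q : Type} [CommRing Q] [Algebra R Q] {σQ : Q →+* Q}
    {H : Type} [AddCommGroup H] [Module R H]

lemma SHForm.form_zero_right (P : SHForm R σ H) (x : H) : P.form x 0 = 0 := by
  have h := P.add_right x 0 0
  rw [add_zero] at h
  exact (left_eq_add.mp h)

lemma SHFormQ.formQ_zero_left (P : SHFormQ R σ Q σQ H) (y : Q ⊗[R] H) :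
    P.formQ 0 y = 0 := by
  have h := P.formQ_add_left 0 0 y
  rw [add_zero] at h
  exact (left_eq_add.mp h)

lemma SHFormQ.formQ_zero_right (P : SHFormQ R σ Q σQ H) (x : Q ⊗[R] H) :
    P.formQ x 0 = 0 := by
  have h := P.formQ_add_right x 0 0
  rw [add_zero] at h
  exact (left_eq_add.mp h)

lemma SHFormQ.formQ_sub_left (P : SHFormQ R σ Q σQ H) (x x' y : Q ⊗[R] H) :
    P.formQ (x - x') y = P.formQ x y - P.formQ x' y := by
  rw [sub_eq_add_neg, ← neg_one_smul Q x', P.formQ_add_left, P.formQ_smul_left]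
  ring

end Helpers

section Helpers2

variable {R : Type} [CommRing R] [IsDomain R] {σ : R →+* R}
    {Q : Type} [Field Q] [Algebra R Q] [IsFractionRing R Q] {σQ : Q →+* Q}
    {H : Type} [AddCommGroup H] [Module R H]

/-- common denominator for an element of `Q ⊗[R] H` -/
lemma exists_denom (w : Q ⊗[R] H) :
    ∃ (d : R) (v : H), d ≠ 0 ∧ (algebraMap R Q d) • w = (1 : Q) ⊗ₜ[R] v := by
  induction w using TensorProduct.induction_on with
  | zero => exact ⟨1, 0, one_ne_zero, by simp⟩
  | tmul q x =>
    obtain ⟨⟨r, d⟩, hd⟩ := IsLocalization.surj (nonZeroDivisors R) q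
    refine ⟨d, r • x, nonZeroDivisors.coe_ne_zero d, ?_⟩
    have h1 : (algebraMap R Q d) • q = algebraMap R Q r := by
      rw [smul_eq_mul, mul_comm]; exact hd
    rw [smul_tmul', h1, Algebra.algebraMap_eq_smul_one, smul_tmul]
  | add a b ha hb =>
    obtain ⟨d1, v1, h1, e1⟩ := ha
    obtain ⟨d2, v2, h2, e2⟩ := hb
    refine ⟨d1 * d2, d2 • v1 + d1 • v2, mul_ne_zero h1 h2, ?_⟩
    rw [map_mul, smul_add, mul_comm, mul_smul, e1, mul_smul, smul_comm,
      e2]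
    rw [algebraMap_smul, algebraMap_smul, ← tmul_smul, ← tmul_smul, ← tmul_add]

/-- non-degeneracy of the rationalized form -/
lemma SHFormQ.nondegQ
    (P : SHFormQ R σ Q σQ H) (w : Q ⊗[R] H)
    (h : ∀ y : H, P.formQ w ((1 : Q) ⊗ₜ[R] y) = 0) : w = 0 := by
  obtain ⟨d, v, hd, e⟩ := exists_denom w
  have hv : ∀ y, P.form v y = 0 := by
    intro y
    have h2 : P.formQ ((1 : Q) ⊗ₜ[R] v) ((1 : Q) ⊗ₜ[R] y)
        = algebraMap R Q d * P.formQ w ((1 : Q) ⊗ₜ[R] y) := by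
      rw [← e, P.formQ_smul_left]
    rw [h y, mul_zero, P.formQ_compat] at h2
    exact IsFractionRing.injective R Q (by rw [h2, map_zero])
  have hv0 : v = 0 := P.nondeg v hv
  rw [hv0, tmul_zero] at e
  have hd' : algebraMap R Q d ≠ 0 := by
    simpa using (map_ne_zero_iff _ (IsFractionRing.injective R Q)).mpr hd
  rcases smul_eq_zero.mp e with h' | h'
  · exact absurd h' hd'
  · exact h'

end Helpers2

/-- the twisted sum of two pointed skew-Hermitian forms is sesquilinear,
skew-symmetric, `R`-valued, and non-degenerate on `H ⊕ H'`. -/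
theorem stmt3 (R : Type) [CommRing R] [IsDomain R]
    (σ : R →+* R) (hσ : ∀ r, σ (σ r) = r)
    (Q : Type) [Field Q] [Algebra R Q] [IsFractionRing R Q]
    (σQ : Q →+* Q) (hσQ : ∀ q, σQ (σQ q) = q)
    (hσQc : ∀ r : R, σQ (algebraMap R Q r) = algebraMap R Q (σ r))
    (H H' : Type) [AddCommGroup H] [Module R H] [Module.Finite R H]
    [AddCommGroup H'] [Module R H'] [Module.Finite R H']
    (P : PointedSH R σ Q σQ H) (P' : PointedSH R σ Q σQ H') :
    let τ : H × H' → H × H' → Q := fun p q =>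
      algebraMap R Q (P.form p.1 q.1) + algebraMap R Q (P'.form p.2 q.2)
        + P.formQ ((1 : Q) ⊗ₜ[R] p.1) P.pt * P'.formQ P'.pt ((1 : Q) ⊗ₜ[R] q.2)
        - P.formQ P.pt ((1 : Q) ⊗ₜ[R] q.1) * P'.formQ ((1 : Q) ⊗ₜ[R] p.2) P'.pt
    (∀ x x' y : H × H', τ (x + x') y = τ x y + τ x' y) ∧
    (∀ (r : R) (x y : H × H'), τ (r • x) y = algebraMap R Q r * τ x y) ∧
    (∀ x y y' : H × H', τ x (y + y') = τ x y + τ x y') ∧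
    (∀ (r : R) (x y : H × H'), τ x (r • y) = σQ (algebraMap R Q r) * τ x y) ∧
    (∀ x y : H × H', τ x y = - σQ (τ y x)) ∧
    (∀ x y : H × H', ∃ r : R, τ x y = algebraMap R Q r) ∧
    (∀ x : H × H', (∀ y, τ x y = 0) → x = 0) := by
  intro τ
  -- useful rewriting facts
  have htm : ∀ (M : Type) [AddCommGroup M] [Module R M] (r : R) (x : M),
      (1 : Q) ⊗ₜ[R] (r • x) = (algebraMap R Q r) • ((1 : Q) ⊗ₜ[R] x) := by
    intro M _ _ r x
    rw [tmul_smul, algebraMap_smul]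
  have hskewQ : ∀ (a b : Q ⊗[R] H), σQ (P.formQ a b) = - P.formQ b a := by
    intro a b
    rw [P.formQ_skew b a, neg_neg]
  have hskewQ' : ∀ (a b : Q ⊗[R] H'), σQ (P'.formQ a b) = - P'.formQ b a := by
    intro a b
    rw [P'.formQ_skew b a, neg_neg]
  refine ⟨?_, ?_, ?_, ?_, ?_, ?_, ?_⟩
  · intro x x' y
    simp only [τ, Prod.fst_add, Prod.snd_add, tmul_add, P.add_left, P'.add_left,
      P.formQ_add_left, P'.formQ_add_left, map_add]
    ring
  · intro r x y
    simp only [τ, Prod.smul_fst, Prod.smul_snd, htm, P.smul_left, P'.smul_left,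
      P.formQ_smul_left, P'.formQ_smul_left, map_mul]
    ring
  · intro x y y'
    simp only [τ, Prod.fst_add, Prod.snd_add, tmul_add, P.add_right, P'.add_right,
      P.formQ_add_right, P'.formQ_add_right, map_add]
    ring
  · intro r x y
    simp only [τ, Prod.smul_fst, Prod.smul_snd, htm, P.smul_right, P'.smul_right,
      P.formQ_smul_right, P'.formQ_smul_right, map_mul, hσQc]
    ring
  · intro x y
    have h1 : σ (P.form y.1 x.1) = - P.form x.1 y.1 := by
      rw [P.skew x.1 y.1, neg_neg]
    have h1' : σ (P'.form y.2 x.2) = - P'.form x.2 y.2 := by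
      rw [P'.skew x.2 y.2, neg_neg]
    simp only [τ, map_add, map_sub, map_mul, hσQc, h1, h1', hskewQ, hskewQ']
    push_cast [map_neg]
    ring
  · intro x y
    obtain ⟨ra, hra⟩ := P.pt_integral x.1
    obtain ⟨rb, hrb⟩ := P'.pt_integral y.2
    obtain ⟨rc, hrc⟩ := P.pt_integral y.1
    obtain ⟨rd, hrd⟩ := P'.pt_integral x.2
    have hA : P.formQ ((1 : Q) ⊗ₜ[R] x.1) P.pt = - algebraMap R Q (σ ra) := by
      rw [P.formQ_skew, hra, hσQc]
    have hD : P'.formQ ((1 : Q) ⊗ₜ[R] x.2) P'.pt = - algebraMap R Q (σ rd) := by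
      rw [P'.formQ_skew, hrd, hσQc]
    refine ⟨P.form x.1 y.1 + P'.form x.2 y.2 + (- σ ra) * rb - rc * (- σ rd), ?_⟩
    simp only [τ, hA, hD, hrb, hrc]
    push_cast [map_neg]
    ring
  · intro x hx
    -- the two "slice" equations
    set c : Q := P'.formQ ((1 : Q) ⊗ₜ[R] x.2) P'.pt with hc
    have slice1 : ∀ y₁ : H,
        algebraMap R Q (P.form x.1 y₁) = c * P.formQ P.pt ((1 : Q) ⊗ₜ[R] y₁) := by
      intro y₁
      have h := hx (y₁, (0 : H'))
      simp only [τ, tmul_zero, P'.formQ_zero_right, P'.form_zero_right, mul_zero,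
        map_zero, add_zero] at h
      rw [hc]
      linear_combination h
    -- w := 1 ⊗ x.1 - c • pt is orthogonal to all 1 ⊗ y
    have hw : (1 : Q) ⊗ₜ[R] x.1 - c • P.pt = 0 := by
      apply P.toSHFormQ.nondegQ
      intro y
      rw [P.formQ_sub_left, P.formQ_smul_left, P.formQ_compat, slice1 y, sub_self]
    have hx1pt : (1 : Q) ⊗ₜ[R] x.1 = c • P.pt := by
      have := sub_eq_zero.mp hw
      exact this
    have hA : P.formQ ((1 : Q) ⊗ₜ[R] x.1) P.pt = 0 := by
      rw [hx1pt, P.formQ_smul_left, P.pt_isotropic, mul_zero]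
    have slice2 : ∀ y₂ : H', P'.form x.2 y₂ = 0 := by
      intro y₂
      have h := hx ((0 : H), y₂)
      simp only [τ, tmul_zero, P.form_zero_right, P.formQ_zero_right, zero_mul,
        map_zero, add_zero, hA, zero_mul, mul_zero, zero_add, sub_zero] at h
      -- h : algebraMap R Q (P'.form x.2 y₂) = 0 (possibly with extra zeros)
      apply IsFractionRing.injective R Q
      rw [map_zero]
      exact h
    have hx2 : x.2 = 0 := P'.nondeg x.2 slice2
    have hc0 : c = 0 := by
      rw [hc, hx2, tmul_zero, P'.formQ_zero_left]
    have hx1z : (1 : Q) ⊗ₜ[R] x.1 = 0 := by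
      rw [hx1pt, hc0, zero_smul]
    have hx1 : x.1 = 0 := by
      apply P.nondeg
      intro y
      apply IsFractionRing.injective R Q
      rw [map_zero, ← P.formQ_compat, hx1z, P.toSHFormQ.formQ_zero_left]
    exact Prod.ext hx1 hx2
end

section
/- Let R be an integral domain with involution, and let (H, ρ, s), (H', ρ', s'), (H'', ρ'', s'') be pointed skew-Hermitian R-modules. Then the twisted sum operation on forms is associative: ρ ⊕_{s, s'+s''} (ρ' ⊕_{s',s''} ρ'') = (ρ ⊕_{s,s'} ρ') ⊕_{s+s', s''} ρ'' as forms on H ⊕ H' ⊕ H''. -/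
open TensorProduct

/-- The twisted sum of two forms relative to distinguished elements `s`, `s'`. -/
def tw {Q V V' : Type} [CommRing Q] (μ : V → V → Q) (μ' : V' → V' → Q)
    (s : V) (s' : V') : V × V' → V × V' → Q :=
  fun p q => μ p.1 q.1 + μ' p.2 q.2 + μ p.1 s * μ' s' q.2 - μ s q.1 * μ' p.2 s'

/-- the twisted sum of pointed skew-Hermitian forms is associative:
`ρ ⊕_{s, s'+s''} (ρ' ⊕_{s',s''} ρ'') = (ρ ⊕_{s,s'} ρ') ⊕_{s+s', s''} ρ''` as forms on
`H ⊕ H' ⊕ H''`. -/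
theorem stmt4 (R : Type) [CommRing R] [IsDomain R]
    (σ : R →+* R) (hσ : ∀ r, σ (σ r) = r)
    (Q : Type) [Field Q] [Algebra R Q] [IsFractionRing R Q]
    (σQ : Q →+* Q) (hσQ : ∀ q, σQ (σQ q) = q)
    (hσQc : ∀ r : R, σQ (algebraMap R Q r) = algebraMap R Q (σ r))
    (H H' H'' : Type) [AddCommGroup H] [Module R H] [Module.Finite R H]
    [AddCommGroup H'] [Module R H'] [Module.Finite R H']
    [AddCommGroup H''] [Module R H''] [Module.Finite R H'']
    (P : PointedSH R σ Q σQ H) (P' : PointedSH R σ Q σQ H')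
    (P'' : PointedSH R σ Q σQ H'') :
    ∀ p q : H × H' × H'',
      tw P.formQ (tw P'.formQ P''.formQ P'.pt P''.pt) P.pt (P'.pt, P''.pt)
        ((1 : Q) ⊗ₜ[R] p.1, ((1 : Q) ⊗ₜ[R] p.2.1, (1 : Q) ⊗ₜ[R] p.2.2))
        ((1 : Q) ⊗ₜ[R] q.1, ((1 : Q) ⊗ₜ[R] q.2.1, (1 : Q) ⊗ₜ[R] q.2.2)) =
      tw (tw P.formQ P'.formQ P.pt P'.pt) P''.formQ (P.pt, P'.pt) P''.pt
        (((1 : Q) ⊗ₜ[R] p.1, (1 : Q) ⊗ₜ[R] p.2.1), (1 : Q) ⊗ₜ[R] p.2.2)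
        (((1 : Q) ⊗ₜ[R] q.1, (1 : Q) ⊗ₜ[R] q.2.1), (1 : Q) ⊗ₜ[R] q.2.2) := by
  intro p q
  simp only [tw, P.pt_isotropic, P'.pt_isotropic, P''.pt_isotropic]
  ring
end

section
/- Let R be an integral domain with involution and let (H₁, ρ₁), (H₂, ρ₂) be skew-Hermitian R-modules. Let Q be the fraction field of R and let ψ : Q ⊗_R H₁ → Q ⊗_R H₂ be a unitary Q-isomorphism, i.e. a Q-linear isomorphism with ρ₂(ψ(x), ψ(y)) = ρ₁(x, y) for all x, y, where ρᵢ denotes the extension of the form to Q ⊗_R Hᵢ. Then the restricted graph Γʳ_ψ = {(h₁, h₂) ∈ H₁ ⊕ H₂ : h₂ = ψ(h₁)} is a Lagrangian submodule of (H₁ ⊕ H₂, (−ρ₁) ⊕ ρ₂). -/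
open TensorProduct

/-!
If `x` and `y` lie in the restricted graph, then `ρ₂(x₂, y₂) = ρ₂(ψ x₁, ψ y₁) = ρ₁(x₁, y₁)`
computed in the rationalizations, so `Γ` is isotropic. Conversely, let `x` be orthogonal to `Γ`
and put `z = x₂ - ψ x₁ ∈ Q ⊗ H₂`. Clearing the denominators of `ψ⁻¹ k` shows that every `k ∈ H₂`
has a multiple `d • k`, `d ≠ 0`, that is the second coordinate of a point of `Γ`; hence
`ρ₂(z, d • k) = σ(d) ρ₂(z, k)` vanishes, and so does `ρ₂(z, k)` because the ring hom `σ` of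
the field `Q` is injective. Clearing the denominators of `z` itself and using the
nondegeneracy of `ρ₂` on `H₂` then gives `z = 0`, i.e. `x ∈ Γ`.
-/

open scoped nonZeroDivisors

theorem IsLocalization.exists_smul_eq_one_tmul {R : Type*} [CommRing R] (S : Submonoid R)
    (A : Type*) [CommRing A] [Algebra R A] [IsLocalization S A] {M : Type*} [AddCommGroup M]
    [Module R M] (z : A ⊗[R] M) : ∃ d ∈ S, ∃ m : M, d • z = (1 : A) ⊗ₜ[R] m := by
  obtain ⟨⟨m, d⟩, hd⟩ := IsLocalizedModule.surj S (TensorProduct.mk R A M 1) z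
  exact ⟨d, d.2, m, hd⟩

variable {R : Type} [CommRing R] {Q : Type} [Field Q] [Algebra R Q]

namespace SHFormQ

variable {σ : R →+* R} {σQ : Q →+* Q} {H : Type} [AddCommGroup H] [Module R H]
  (F : SHFormQ R σ Q σQ H)

theorem formQ_sub_left_s7 (x x' y : Q ⊗[R] H) :
    F.formQ (x - x') y = F.formQ x y - F.formQ x' y :=
  eq_sub_of_add_eq (by rw [← F.formQ_add_left, sub_add_cancel])

theorem formQ_eq_zero_of_formQ_smul_right_eq_zero {q : Q} (hq : q ≠ 0) {x y : Q ⊗[R] H}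
    (h : F.formQ x (q • y) = 0) : F.formQ x y = 0 := by
  rw [F.formQ_smul_right] at h
  exact (mul_eq_zero.mp h).resolve_left ((map_ne_zero σQ).mpr hq)

theorem eq_zero_of_forall_formQ_one_tmul_eq_zero [IsFractionRing R Q] {z : Q ⊗[R] H}
    (hz : ∀ k : H, F.formQ z ((1 : Q) ⊗ₜ[R] k) = 0) : z = 0 := by
  obtain ⟨d, hd, h, hdz⟩ := IsLocalization.exists_smul_eq_one_tmul R⁰ Q z
  have hdQ : algebraMap R Q d ≠ 0 := (IsLocalization.map_units Q ⟨d, hd⟩).ne_zero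
  rw [← algebraMap_smul Q] at hdz
  have hh : h = 0 := F.nondeg h fun k ↦ IsFractionRing.injective R Q <| by
    rw [← F.formQ_compat, ← hdz, F.formQ_smul_left, hz, mul_zero, map_zero]
  rw [hh, tmul_zero, smul_eq_zero] at hdz
  exact hdz.resolve_left hdQ

end SHFormQ

section RestrictedGraph

variable [IsFractionRing R Q] {σ : R →+* R} {σQ : Q →+* Q} {H₁ H₂ : Type}
  [AddCommGroup H₁] [Module R H₁] [AddCommGroup H₂] [Module R H₂]

def restrictedGraph (ψ : (Q ⊗[R] H₁) ≃ₗ[Q] (Q ⊗[R] H₂)) : Set (H₁ × H₂) :=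
  {p | (1 : Q) ⊗ₜ[R] p.2 = ψ ((1 : Q) ⊗ₜ[R] p.1)}

theorem exists_smul_mem_restrictedGraph (ψ : (Q ⊗[R] H₁) ≃ₗ[Q] (Q ⊗[R] H₂)) (k : H₂) :
    ∃ d ∈ R⁰, ∃ h : H₁, (h, d • k) ∈ restrictedGraph ψ := by
  obtain ⟨d, hd, h, hdk⟩ :=
    IsLocalization.exists_smul_eq_one_tmul R⁰ Q (ψ.symm ((1 : Q) ⊗ₜ[R] k))
  refine ⟨d, hd, h, ?_⟩
  change (1 : Q) ⊗ₜ[R] (d • k) = ψ ((1 : Q) ⊗ₜ[R] h)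
  rw [← hdk, ← algebraMap_smul Q d (ψ.symm _), map_smul, ψ.apply_symm_apply, algebraMap_smul,
    tmul_smul]

variable (F₁ : SHFormQ R σ Q σQ H₁) (F₂ : SHFormQ R σ Q σQ H₂)
  {ψ : (Q ⊗[R] H₁) ≃ₗ[Q] (Q ⊗[R] H₂)}

theorem form_eq_of_mem_restrictedGraph (hψ : ∀ x y, F₂.formQ (ψ x) (ψ y) = F₁.formQ x y)
    {x y : H₁ × H₂} (hx : x ∈ restrictedGraph ψ) (hy : y ∈ restrictedGraph ψ) :
    F₂.form x.2 y.2 = F₁.form x.1 y.1 :=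
  IsFractionRing.injective R Q <| by
    rw [← F₂.formQ_compat, ← F₁.formQ_compat, hx, hy, hψ]

theorem mem_restrictedGraph_of_forall_form_eq (hψ : ∀ x y, F₂.formQ (ψ x) (ψ y) = F₁.formQ x y)
    {x : H₁ × H₂} (hx : ∀ y ∈ restrictedGraph ψ, F₂.form x.2 y.2 = F₁.form x.1 y.1) :
    x ∈ restrictedGraph ψ := by
  set z := (1 : Q) ⊗ₜ[R] x.2 - ψ ((1 : Q) ⊗ₜ[R] x.1)
  have hz : ∀ k : H₂, F₂.formQ z ((1 : Q) ⊗ₜ[R] k) = 0 := by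
    intro k
    obtain ⟨d, hd, h, hmem⟩ := exists_smul_mem_restrictedGraph ψ k
    have hdQ : algebraMap R Q d ≠ 0 := (IsLocalization.map_units Q ⟨d, hd⟩).ne_zero
    have hzd : F₂.formQ z ((1 : Q) ⊗ₜ[R] (d • k)) = 0 := by
      rw [F₂.formQ_sub_left_s7, F₂.formQ_compat, hmem, hψ, F₁.formQ_compat, hx _ hmem, sub_self]
    rw [tmul_smul, ← algebraMap_smul Q] at hzd
    exact F₂.formQ_eq_zero_of_formQ_smul_right_eq_zero hdQ hzd
  exact sub_eq_zero.mp (F₂.eq_zero_of_forall_formQ_one_tmul_eq_zero hz)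

theorem mem_restrictedGraph_iff_forall_form_eq (hψ : ∀ x y, F₂.formQ (ψ x) (ψ y) = F₁.formQ x y)
    (x : H₁ × H₂) : x ∈ restrictedGraph ψ ↔
      ∀ y ∈ restrictedGraph ψ, F₂.form x.2 y.2 = F₁.form x.1 y.1 :=
  ⟨fun hx _ hy ↦ form_eq_of_mem_restrictedGraph F₁ F₂ hψ hx hy,
    mem_restrictedGraph_of_forall_form_eq F₁ F₂ hψ⟩

end RestrictedGraph

theorem stmt7_general (R : Type) [CommRing R]
    (σ : R →+* R)
    (Q : Type) [Field Q] [Algebra R Q] [IsFractionRing R Q]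
    (σQ : Q →+* Q)
    (H₁ H₂ : Type) [AddCommGroup H₁] [Module R H₁]
    [AddCommGroup H₂] [Module R H₂]
    (F₁ : SHFormQ R σ Q σQ H₁) (F₂ : SHFormQ R σ Q σQ H₂)
    (ψ : (Q ⊗[R] H₁) ≃ₗ[Q] (Q ⊗[R] H₂))
    (hψ : ∀ x y : Q ⊗[R] H₁, F₂.formQ (ψ x) (ψ y) = F₁.formQ x y) :
    let Γ : Set (H₁ × H₂) :=
      {p | (1 : Q) ⊗ₜ[R] p.2 = ψ ((1 : Q) ⊗ₜ[R] p.1)}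
    ∀ x : H₁ × H₂, x ∈ Γ ↔ ∀ y ∈ Γ, - F₁.form x.1 y.1 + F₂.form x.2 y.2 = 0 := by
  intro Γ x
  simp only [neg_add_eq_zero, eq_comm (a := F₁.form _ _)]
  exact mem_restrictedGraph_iff_forall_form_eq F₁ F₂ hψ x

/-- the restricted graph of a unitary `Q`-isomorphism between the
rationalizations of two skew-Hermitian `R`-modules is a Lagrangian submodule of
`(H₁ ⊕ H₂, (−ρ₁) ⊕ ρ₂)`. -/
theorem stmt7 (R : Type) [CommRing R] [IsDomain R]
    (σ : R →+* R) (hσ : ∀ r, σ (σ r) = r)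
    (Q : Type) [Field Q] [Algebra R Q] [IsFractionRing R Q]
    (σQ : Q →+* Q) (hσQ : ∀ q, σQ (σQ q) = q)
    (hσQc : ∀ r : R, σQ (algebraMap R Q r) = algebraMap R Q (σ r))
    (H₁ H₂ : Type) [AddCommGroup H₁] [Module R H₁] [Module.Finite R H₁]
    [AddCommGroup H₂] [Module R H₂] [Module.Finite R H₂]
    (F₁ : SHFormQ R σ Q σQ H₁) (F₂ : SHFormQ R σ Q σQ H₂)
    (ψ : (Q ⊗[R] H₁) ≃ₗ[Q] (Q ⊗[R] H₂))
    (hψ : ∀ x y : Q ⊗[R] H₁, F₂.formQ (ψ x) (ψ y) = F₁.formQ x y) :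
    let Γ : Set (H₁ × H₂) :=
      {p | (1 : Q) ⊗ₜ[R] p.2 = ψ ((1 : Q) ⊗ₜ[R] p.1)}
    ∀ x : H₁ × H₂, x ∈ Γ ↔ ∀ y ∈ Γ, - F₁.form x.1 y.1 + F₂.form x.2 y.2 = 0 :=
  stmt7_general R σ Q σQ H₁ H₂ F₁ F₂ ψ hψ
end

section
/- Let R be an integral domain with involution, (H₁,ρ₁), (H₂,ρ₂), (H₃,ρ₃) skew-Hermitian R-modules, and ψ : Q⊗H₁ → Q⊗H₂, ψ' : Q⊗H₂ → Q⊗H₃ unitary Q-isomorphisms. Then the composition of restricted graphs as Lagrangian relations equals the restricted graph of the composition: Γʳ_{ψ'} ∘ Γʳ_ψ = Γʳ_{ψ'∘ψ}, where ∘ on the left is composition of Lagrangian relations (closure of relational composition). -/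
open TensorProduct

theorem clear_denom (R : Type) [CommRing R] [IsDomain R]
    (Q : Type) [Field Q] [Algebra R Q] [IsFractionRing R Q]
    (H : Type) [AddCommGroup H] [Module R H] :
    ∀ x : Q ⊗[R] H, ∃ r : R, r ≠ 0 ∧ ∃ h : H,
      (algebraMap R Q r) • x = (1 : Q) ⊗ₜ[R] h := by
  intro x
  induction x using TensorProduct.induction_on with
  | zero => exact ⟨1, one_ne_zero, 0, by simp⟩
  | tmul q h =>
    obtain ⟨⟨a, s⟩, hs⟩ := IsLocalization.surj (nonZeroDivisors R) q
    refine ⟨s, nonZeroDivisors.coe_ne_zero s, a • h, ?_⟩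
    rw [smul_tmul', smul_eq_mul, mul_comm, hs]
    rw [TensorProduct.tmul_smul, smul_tmul', Algebra.smul_def, mul_one]
  | add x y hx hy =>
    obtain ⟨r1, hr1, h1, e1⟩ := hx
    obtain ⟨r2, hr2, h2, e2⟩ := hy
    refine ⟨r1 * r2, mul_ne_zero hr1 hr2, r2 • h1 + r1 • h2, ?_⟩
    rw [smul_add, map_mul]
    rw [TensorProduct.tmul_add, TensorProduct.tmul_smul, TensorProduct.tmul_smul,
      ← e1, ← e2, algebraMap_smul, algebraMap_smul]
    rw [mul_smul, mul_comm, mul_smul]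
    simp only [algebraMap_smul]
    rw [smul_comm r1 r2 x, smul_comm r2 r1 y]

/-- composition of restricted graphs of unitary `Q`-isomorphisms, as
Lagrangian relations (closure of the relational composition), equals the restricted graph
of the composition: `Γʳ_{ψ'} ∘ Γʳ_ψ = Γʳ_{ψ' ∘ ψ}`. -/
theorem stmt8 (R : Type) [CommRing R] [IsDomain R]
    (σ : R →+* R) (hσ : ∀ r, σ (σ r) = r)
    (Q : Type) [Field Q] [Algebra R Q] [IsFractionRing R Q]
    (σQ : Q →+* Q) (hσQ : ∀ q, σQ (σQ q) = q)
    (hσQc : ∀ r : R, σQ (algebraMap R Q r) = algebraMap R Q (σ r))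
    (H₁ H₂ H₃ : Type) [AddCommGroup H₁] [Module R H₁] [Module.Finite R H₁]
    [AddCommGroup H₂] [Module R H₂] [Module.Finite R H₂]
    [AddCommGroup H₃] [Module R H₃] [Module.Finite R H₃]
    (F₁ : SHFormQ R σ Q σQ H₁) (F₂ : SHFormQ R σ Q σQ H₂) (F₃ : SHFormQ R σ Q σQ H₃)
    (ψ : (Q ⊗[R] H₁) ≃ₗ[Q] (Q ⊗[R] H₂)) (ψ' : (Q ⊗[R] H₂) ≃ₗ[Q] (Q ⊗[R] H₃))
    (hψ : ∀ x y : Q ⊗[R] H₁, F₂.formQ (ψ x) (ψ y) = F₁.formQ x y)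
    (hψ' : ∀ x y : Q ⊗[R] H₂, F₃.formQ (ψ' x) (ψ' y) = F₂.formQ x y) :
    ∀ p : H₁ × H₃,
      (∃ r : R, r ≠ 0 ∧ ∃ h₂ : H₂,
          (1 : Q) ⊗ₜ[R] h₂ = ψ ((1 : Q) ⊗ₜ[R] (r • p.1)) ∧
          (1 : Q) ⊗ₜ[R] (r • p.2) = ψ' ((1 : Q) ⊗ₜ[R] h₂)) ↔
      (1 : Q) ⊗ₜ[R] p.2 = ψ' (ψ ((1 : Q) ⊗ₜ[R] p.1)) := by
  have key : ∀ (H : Type) (inst : AddCommGroup H) (inst2 : Module R H) (r : R) (x : H),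
      (1:Q) ⊗ₜ[R] (r • x) = (algebraMap R Q r) • ((1:Q) ⊗ₜ[R] x) := by
    intro H _ _ r x
    rw [TensorProduct.tmul_smul, algebraMap_smul]
  intro p
  constructor
  · rintro ⟨r, hr, h₂, e1, e2⟩
    have hrQ : algebraMap R Q r ≠ 0 := fun h =>
      hr (IsFractionRing.injective R Q (by simpa using h))
    refine smul_right_injective (Q ⊗[R] H₃) hrQ ?_
    show algebraMap R Q r • ((1:Q) ⊗ₜ[R] p.2) = algebraMap R Q r • ψ' (ψ ((1:Q) ⊗ₜ[R] p.1))
    rw [← map_smul, ← map_smul, ← key, ← key, ← e1, e2]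
  · intro hgraph
    obtain ⟨r, hr, h₂, e⟩ := clear_denom R Q H₂ (ψ ((1:Q) ⊗ₜ[R] p.1))
    refine ⟨r, hr, h₂, ?_, ?_⟩
    · rw [key, map_smul]
      exact e.symm
    · rw [key, hgraph, ← e, map_smul]
end

section
/- Let R be a commutative ring without zero divisors in which 2 ≠ 0, with involution, and let G ⊆ R^× satisfy x̄ = x⁻¹ for x ∈ G. Fix units a₁,…,a_g, b₁,…,b_g ∈ G. Consider the 2g × 2g skew-Hermitian block matrix S = [[S_aa, S_ab],[S_ba, S_bb]] over R where, writing P(x,y) = (1−x)(1−ȳ) and Q(x,y) = (x+1)(ȳ+1) − 2: S_aa has diagonal entries ā_i − a_i, entries P(a_i,a_j) below the diagonal (i > j) and −P(a_i,a_j) above; S_ab has diagonal entries Q(a_i,b_i), entries P(a_i,b_j) for i > j and −P(a_i,b_j) for i < j; S_ba = −conj(S_ab)ᵗ; S_bb has diagonal entries b_i − b̄_i, entries P(b_i,b_j) for i > j and −P(b_i,b_j) for i < j. Then det(S) = 4^g. -/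
/-!
Every block of `S` has the shape `diag d + (±x i * y j)`, with `+` below and `-` above the
diagonal, i.e. `diag (d - x y) + diag x * Σ * diag y` for the sign matrix `Σ`. Hence
`S = 2 K + X Y` with `X = [diag (1 - a); diag (1 - b)] Σ` of size `2g × g` and
`Y = [diag (1 - ā) | diag (1 - b̄)]`. Using `a ā = b b̄ = 1`, the matrix `K` consists of one
`2 × 2` block of determinant `1` per handle, and its inverse `K'` satisfies `Y K' X = 0`.
So `S = K (2 + (K' X) Y)` with `Y (K' X) = 0`; by Sylvester's identity for characteristic
polynomials `(K' X) Y` has characteristic polynomial `t ^ (2g)`, and `det S = 2 ^ (2g) = 4 ^ g`.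
-/

open Matrix

namespace Matrix

section Determinant

variable {R : Type*} [CommRing R] {m n : Type*} [Fintype m] [Fintype n] [DecidableEq m]
  [DecidableEq n]

theorem charpoly_mul_eq_X_pow_of_mul_eq_zero {A : Matrix n m R} {B : Matrix m n R}
    (h : B * A = 0) : (A * B).charpoly = Polynomial.X ^ Fintype.card n := by
  have hcomm := charpoly_mul_comm' A B
  rw [h, charpoly_zero, ← pow_add, add_comm, pow_add] at hcomm
  exact (Polynomial.isRegular_X_pow _).left hcomm

theorem det_smul_one_add_mul_of_mul_eq_zero (c : R) {A : Matrix n m R} {B : Matrix m n R}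
    (h : B * A = 0) : (c • 1 + A * B).det = c ^ Fintype.card n := by
  have hc := eval_charpoly (-A * B) c
  rw [charpoly_mul_eq_X_pow_of_mul_eq_zero (by rw [Matrix.mul_neg, h, neg_zero]),
    Polynomial.eval_pow, Polynomial.eval_X, Matrix.neg_mul, sub_neg_eq_add, scalar_apply,
    ← smul_one_eq_diagonal] at hc
  exact hc.symm

theorem det_smul_add_mul_of_mul_eq_zero (c : R) {K K' : Matrix n n R} (hK : K * K' = 1)
    {X : Matrix n m R} {Y : Matrix m n R} (h : Y * K' * X = 0) :
    (c • K + X * Y).det = c ^ Fintype.card n * K.det := by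
  have hfactor : c • K + X * Y = K * (c • 1 + K' * X * Y) := by
    rw [Matrix.mul_add, Matrix.mul_smul, Matrix.mul_one, ← Matrix.mul_assoc, ← Matrix.mul_assoc,
      hK, Matrix.one_mul]
  rw [hfactor, det_mul, det_smul_one_add_mul_of_mul_eq_zero c (by rwa [← Matrix.mul_assoc]),
    mul_comm]

variable {ι : Type*} [Fintype ι] [DecidableEq ι]

theorem det_fromBlocks_diagonal (α β γ δ : ι → R) :
    (fromBlocks (diagonal α) (diagonal β) (diagonal γ) (diagonal δ)).det =
      ∏ i, (α i * δ i - β i * γ i) := by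
  let e : Fin 2 × ι ≃ ι ⊕ ι :=
    (finTwoEquiv.prodCongr (Equiv.refl ι)).trans (Equiv.boolProdEquivSum ι)
  have hblock : (fromBlocks (diagonal α) (diagonal β) (diagonal γ) (diagonal δ)).submatrix e e =
      blockDiagonal fun i => !![α i, β i; γ i, δ i] := by
    ext ⟨x, i⟩ ⟨y, j⟩
    fin_cases x <;> fin_cases y
    all_goals simp [e, finTwoEquiv, blockDiagonal_apply, diagonal_apply]
  rw [← det_submatrix_equiv_self e, hblock, det_blockDiagonal]
  simp [det_fin_two_of]

theorem fromBlocks_diagonal_mul_fromBlocks_diagonal {α β γ δ : ι → R}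
    (h : ∀ i, α i * δ i - β i * γ i = 1) :
    fromBlocks (diagonal α) (diagonal β) (diagonal γ) (diagonal δ) *
      fromBlocks (diagonal δ) (diagonal (-β)) (diagonal (-γ)) (diagonal α) = 1 := by
  rw [fromBlocks_multiply, ← fromBlocks_one, ← diagonal_one, ← diagonal_zero]
  simp only [diagonal_mul_diagonal, diagonal_add, Pi.neg_apply]
  congr 1 <;> congr 1 <;> funext i <;> [linear_combination h i; ring; ring; linear_combination h i]

theorem fromCols_diagonal_mul_fromBlocks_diagonal_mul_fromRows_diagonal
    (p q α β γ δ u v : ι → R) :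
    fromCols (diagonal p) (diagonal q) *
        fromBlocks (diagonal α) (diagonal β) (diagonal γ) (diagonal δ) *
        fromRows (diagonal u) (diagonal v) =
      diagonal fun i => p i * (α i * u i + β i * v i) + q i * (γ i * u i + δ i * v i) := by
  simp only [fromCols_mul_fromBlocks, fromCols_mul_fromRows, diagonal_mul_diagonal, diagonal_add]
  congr 1
  ext i
  ring

end Determinant

section SignedOuter

variable {R : Type*} [CommRing R] {ι : Type*} [Fintype ι] [LinearOrder ι]

def signMatrix (ι R : Type*) [LinearOrder ι] [Ring R] : Matrix ι ι R :=
  of fun i j => if j ≤ i then 1 else -1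

def signedOuter (d x y : ι → R) : Matrix ι ι R :=
  of fun i j => if i = j then d i else if j < i then x i * y j else -(x i * y j)

theorem signedOuter_eq (d x y : ι → R) :
    signedOuter d x y =
      diagonal (fun i => d i - x i * y i) + diagonal x * signMatrix ι R * diagonal y := by
  ext i j
  rcases lt_trichotomy j i with h | rfl | h
  · simp [signedOuter, signMatrix, h.ne', h.le, h]
  · simp [signedOuter, signMatrix]
  · simp [signedOuter, signMatrix, h.ne, h.not_ge, h.not_gt]

end SignedOuter

end Matrix

section TwistedIntersectionMatrix

variable {R : Type*} [CommRing R] {ι : Type*} [Fintype ι] [LinearOrder ι]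

/-- The matrix `S`, with `a'`, `b'` in the role of `ā`, `b̄`; the lower left block is
`-conj(S_ab)ᵀ` written out. -/
def twistedIntersectionMatrix (a a' b b' : ι → R) : Matrix (ι ⊕ ι) (ι ⊕ ι) R :=
  fromBlocks (signedOuter (fun i => a' i - a i) (fun i => 1 - a i) (fun i => 1 - a' i))
    (signedOuter (fun i => (a i + 1) * (b' i + 1) - 2) (fun i => 1 - a i) (fun i => 1 - b' i))
    (signedOuter (fun i => -((a' i + 1) * (b i + 1) - 2)) (fun i => 1 - b i) (fun i => 1 - a' i))
    (signedOuter (fun i => b i - b' i) (fun i => 1 - b i) (fun i => 1 - b' i))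

variable {a a' b b' : ι → R}

theorem twistedIntersectionMatrix_eq_smul_add_mul (ha : ∀ i, a i * a' i = 1)
    (hb : ∀ i, b i * b' i = 1) :
    twistedIntersectionMatrix a a' b b' =
      (2 : R) • fromBlocks (diagonal fun i => a' i - 1) (diagonal fun i => a i + b' i - 1)
          (diagonal fun i => -(a' i * b i)) (diagonal fun i => b i - 1) +
        fromRows (diagonal fun i => 1 - a i) (diagonal fun i => 1 - b i) * signMatrix ι R *
          fromCols (diagonal fun i => 1 - a' i) (diagonal fun i => 1 - b' i) := by
  rw [fromRows_mul, fromRows_mul_fromCols, fromBlocks_smul, fromBlocks_add]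
  simp only [twistedIntersectionMatrix, signedOuter_eq, ← diagonal_smul]
  congr 1 <;> congr 2 <;> funext i <;> simp only [Pi.smul_apply, smul_eq_mul]
  · linear_combination -ha i
  · ring
  · ring
  · linear_combination -hb i

theorem det_twistedIntersectionMatrix (ha : ∀ i, a i * a' i = 1) (hb : ∀ i, b i * b' i = 1) :
    (twistedIntersectionMatrix a a' b b').det = 4 ^ Fintype.card ι := by
  have hunimodular (i : ι) :
      (a' i - 1) * (b i - 1) - (a i + b' i - 1) * -(a' i * b i) = 1 := by
    linear_combination b i * ha i + a' i * hb i
  rw [twistedIntersectionMatrix_eq_smul_add_mul ha hb, det_smul_add_mul_of_mul_eq_zero 2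
    (fromBlocks_diagonal_mul_fromBlocks_diagonal hunimodular), det_fromBlocks_diagonal]
  · rw [Finset.prod_eq_one fun i _ => hunimodular i, mul_one, Fintype.card_sum, ← two_mul,
      pow_mul]
    norm_num
  · rw [← Matrix.mul_assoc, fromCols_diagonal_mul_fromBlocks_diagonal_mul_fromRows_diagonal]
    convert Matrix.zero_mul (signMatrix ι R)
    rw [← diagonal_zero]
    congr 1
    funext i
    simp only [Pi.neg_apply]
    linear_combination (1 - a' i) * hb i - (1 - b' i) * b i * ha i

end TwistedIntersectionMatrix

theorem stmt10_general (R : Type) [CommRing R]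
    (σ : R →+* R)
    (G : Subgroup Rˣ) (hσG : ∀ u : Rˣ, u ∈ G → σ (u : R) = ((u⁻¹ : Rˣ) : R))
    (g : ℕ) (a b : Fin g → Rˣ) (ha : ∀ i, a i ∈ G) (hb : ∀ i, b i ∈ G) :
    let P : R → R → R := fun x y => (1 - x) * (1 - σ y)
    let Qf : R → R → R := fun x y => (x + 1) * (σ y + 1) - 2
    let Saa : Matrix (Fin g) (Fin g) R := Matrix.of fun i j =>
      if i = j then σ (a i : R) - (a i : R)
      else if j < i then P (a i : R) (a j : R) else - P (a i : R) (a j : R)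
    let Sab : Matrix (Fin g) (Fin g) R := Matrix.of fun i j =>
      if i = j then Qf (a i : R) (b i : R)
      else if j < i then P (a i : R) (b j : R) else - P (a i : R) (b j : R)
    let Sbb : Matrix (Fin g) (Fin g) R := Matrix.of fun i j =>
      if i = j then (b i : R) - σ (b i : R)
      else if j < i then P (b i : R) (b j : R) else - P (b i : R) (b j : R)
    let Sba : Matrix (Fin g) (Fin g) R := Matrix.of fun i j => - σ (Sab j i)
    (Matrix.fromBlocks Saa Sab Sba Sbb).det = 4 ^ g := by
  intro P Qf Saa Sab Sbb Sba
  have hmul_σ (u : Rˣ) (hu : u ∈ G) : (u : R) * σ u = 1 := by rw [hσG u hu, Units.mul_inv]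
  have hσσ (u : Rˣ) (hu : u ∈ G) : σ (σ u) = u := by
    rw [hσG u hu, hσG _ (inv_mem hu), inv_inv]
  have hSba : Sba = signedOuter (fun i => -((σ (a i) + 1) * (b i + 1) - 2))
      (fun i => 1 - (b i : R)) (fun i => 1 - σ (a i)) := by
    ext i j
    simp only [Sba, Sab, Qf, P, signedOuter, of_apply]
    rcases lt_trichotomy j i with h | rfl | h
    · simp only [h.ne, h.ne', h, h.not_gt, ↓reduceIte, map_neg, map_mul, map_sub, map_one,
        neg_neg, hσσ _ (hb i)]
      ring
    · simp [hσσ _ (hb j), map_ofNat]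
    · simp only [h.ne, h.ne', h, h.not_gt, ↓reduceIte, map_mul, map_sub, map_one, neg_inj,
        hσσ _ (hb i)]
      ring
  have hS : fromBlocks Saa Sab Sba Sbb = twistedIntersectionMatrix (fun i => (a i : R))
      (fun i => σ (a i)) (fun i => (b i : R)) (fun i => σ (b i)) := by
    rw [hSba]
    rfl
  rw [hS, det_twistedIntersectionMatrix (fun i => hmul_σ _ (ha i)) (fun i => hmul_σ _ (hb i)),
    Fintype.card_fin]

/-- the determinant of the matrix of the twisted intersection form of the
genus-`g` surface in the basis of meridians and parallels equals `4^g`. -/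
theorem stmt10 (R : Type) [CommRing R] [IsDomain R] (h2 : (2 : R) ≠ 0)
    (σ : R →+* R) (hσ : ∀ r, σ (σ r) = r)
    (G : Subgroup Rˣ) (hσG : ∀ u : Rˣ, u ∈ G → σ (u : R) = ((u⁻¹ : Rˣ) : R))
    (g : ℕ) (a b : Fin g → Rˣ) (ha : ∀ i, a i ∈ G) (hb : ∀ i, b i ∈ G) :
    let P : R → R → R := fun x y => (1 - x) * (1 - σ y)
    let Qf : R → R → R := fun x y => (x + 1) * (σ y + 1) - 2
    let Saa : Matrix (Fin g) (Fin g) R := Matrix.of fun i j =>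
      if i = j then σ (a i : R) - (a i : R)
      else if j < i then P (a i : R) (a j : R) else - P (a i : R) (a j : R)
    let Sab : Matrix (Fin g) (Fin g) R := Matrix.of fun i j =>
      if i = j then Qf (a i : R) (b i : R)
      else if j < i then P (a i : R) (b j : R) else - P (a i : R) (b j : R)
    let Sbb : Matrix (Fin g) (Fin g) R := Matrix.of fun i j =>
      if i = j then (b i : R) - σ (b i : R)
      else if j < i then P (b i : R) (b j : R) else - P (b i : R) (b j : R)
    let Sba : Matrix (Fin g) (Fin g) R := Matrix.of fun i j => - σ (Sab j i)
    (Matrix.fromBlocks Saa Sab Sba Sbb).det = 4 ^ g :=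
  stmt10_general R σ G hσG g a b ha hb
end

section
/- Let R be a commutative ring without zero divisors equipped with a ring homomorphism ε_R : R → ℤ and an involutive endomorphism, let G ⊆ R^× be a subgroup with ε_R(G) = {1}, and let Q be the fraction field of R. Let A be a group, φ : A → G a group homomorphism inducing φ_Q : ℤ[A] → Q, and let (C, ∂) be a bounded chain complex of finitely generated free ℤ[A]-modules with chosen bases such that ℤ ⊗_{ℤ[A]} C (via the augmentation ℤ[A] → ℤ) is acyclic. Then Q ⊗_{ℤ[A]} C is acyclic. -/
/-!
The homomorphism `φ_R : ℤ[A] → R` induced by `φ` factors both maps: `ε = ε_R ∘ φ_R` (since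
`ε_R(G) = 1`) and `φ_Q = ι ∘ φ_R` with `ι : R → Q` injective. So an element of `ℤ[A]` with
nonzero augmentation has nonzero image in `Q`; applied to minors of the differentials, this
gives `rank_ℚ ε(∂ᵢ) ≤ rank_Q φ_Q(∂ᵢ)`. Exactness of `ℚ ⊗ C` (obtained from that of `ℤ ⊗ C`
by clearing denominators) means
`rank ε(∂ᵢ) + rank ε(∂ᵢ₊₁) = nᵢ₊₁`, while `∂ᵢ ∂ᵢ₊₁ = 0` bounds the same sum over `Q` by `nᵢ₊₁`;
hence equality holds over `Q`, which is exactness of `Q ⊗ C`.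
-/

open Module Submodule

theorem exists_linearIndependent_comp_fin {K V ι : Type*} [Field K] [AddCommGroup V]
    [Module K V] [Finite ι] (v : ι → V) {r : ℕ} (hr : finrank K (span K (Set.range v)) = r) :
    ∃ s : Fin r → ι, LinearIndependent K (v ∘ s) := by
  obtain ⟨κ, a, ha, hspan, hli⟩ := exists_linearIndependent' K v
  have : Finite κ := Finite.of_injective a ha
  cases nonempty_fintype κ
  have hcard : Fintype.card κ = r := by rw [← hr, ← hspan, finrank_span_eq_card hli]
  let e := Fintype.equivFinOfCardEq hcard
  exact ⟨a ∘ e.symm, hli.comp e.symm e.symm.injective⟩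

namespace Matrix

variable {l m n : Type*} [Fintype n]

theorem range_mulVecLin_le_ker_iff {R : Type*} [CommRing R] [Fintype m] (A : Matrix l m R)
    (B : Matrix m n R) :
    LinearMap.range B.mulVecLin ≤ LinearMap.ker A.mulVecLin ↔ A * B = 0 := by
  classical
  rw [LinearMap.range_le_ker_iff, ← mulVecLin_mul, ← toLin'_apply']
  exact toLin'.map_eq_zero_iff

section Field

variable {K : Type*} [Field K]

theorem exists_submatrix_det_ne_zero [Fintype m] (M : Matrix m n K) :
    ∃ (rows : Fin M.rank → m) (cols : Fin M.rank → n), (M.submatrix rows cols).det ≠ 0 := by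
  obtain ⟨cols, hcols⟩ :=
    exists_linearIndependent_comp_fin M.col M.rank_eq_finrank_span_cols.symm
  have hrank : (M.submatrix id cols).rank = M.rank := by
    rw [← rank_transpose,
      (show LinearIndependent K (M.submatrix id cols)ᵀ.row from hcols).rank_matrix,
      Fintype.card_fin]
  obtain ⟨rows, hrows⟩ := exists_linearIndependent_comp_fin (M.submatrix id cols).row
    ((M.submatrix id cols).rank_eq_finrank_span_row.symm.trans hrank)
  refine ⟨rows, cols, ?_⟩
  have hunit : IsUnit (M.submatrix rows cols) := linearIndependent_rows_iff_isUnit.mp hrows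
  exact ((isUnit_iff_isUnit_det _).mp hunit).ne_zero

theorem le_rank_of_submatrix_det_ne_zero {r : ℕ} (M : Matrix m n K) (rows : Fin r → m)
    (cols : Fin r → n) (h : (M.submatrix rows cols).det ≠ 0) : r ≤ M.rank :=
  calc r = (M.submatrix rows cols).rank := by rw [rank_of_det_ne_zero h, Fintype.card_fin]
    _ ≤ M.rank := rank_submatrix_le M rows cols

theorem rank_map_le_rank_map [Fintype m] {S L : Type*} [CommRing S] [Field L] (f : S →+* K)
    (g : S →+* L) (hfg : ∀ x, f x ≠ 0 → g x ≠ 0) (M : Matrix m n S) :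
    (M.map f).rank ≤ (M.map g).rank := by
  obtain ⟨rows, cols, hdet⟩ := (M.map f).exists_submatrix_det_ne_zero
  refine le_rank_of_submatrix_det_ne_zero _ rows cols ?_
  rw [submatrix_map, ← RingHom.mapMatrix_apply, ← RingHom.map_det] at hdet ⊢
  exact hfg _ hdet

theorem ker_mulVecLin_eq_range_iff_rank_add_rank [Fintype m] (A : Matrix l m K)
    (B : Matrix m n K) (hAB : A * B = 0) :
    LinearMap.ker A.mulVecLin = LinearMap.range B.mulVecLin ↔
      A.rank + B.rank = Fintype.card m := by
  have hnullity := A.mulVecLin.finrank_range_add_finrank_ker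
  rw [finrank_fintype_fun_eq_card] at hnullity
  constructor
  · intro h
    rw [h] at hnullity
    exact hnullity
  · intro h
    refine (eq_of_le_of_finrank_eq ((range_mulVecLin_le_ker_iff A B).2 hAB) ?_).symm
    unfold rank at h
    omega

theorem ker_mulVecLin_map_eq_range_of_ne_zero [Fintype l] [Fintype m] {S K L : Type*}
    [CommRing S] [Field K] [Field L] (f : S →+* K) (g : S →+* L)
    (hfg : ∀ x, f x ≠ 0 → g x ≠ 0) (A : Matrix l m S) (B : Matrix m n S) (hAB : A * B = 0)
    (hf : LinearMap.ker (A.map f).mulVecLin = LinearMap.range (B.map f).mulVecLin) :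
    LinearMap.ker (A.map g).mulVecLin = LinearMap.range (B.map g).mulVecLin := by
  have hABf : A.map f * B.map f = 0 := by
    rw [← Matrix.map_mul, hAB, Matrix.map_zero _ (map_zero f)]
  have hABg : A.map g * B.map g = 0 := by
    rw [← Matrix.map_mul, hAB, Matrix.map_zero _ (map_zero g)]
  have hf_rank := (ker_mulVecLin_eq_range_iff_rank_add_rank _ _ hABf).1 hf
  have hg_rank := rank_add_rank_le_card_of_mul_eq_zero hABg
  have hA := rank_map_le_rank_map f g hfg A
  have hB := rank_map_le_rank_map f g hfg B
  exact (ker_mulVecLin_eq_range_iff_rank_add_rank _ _ hABg).2 (by omega)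

end Field

theorem ker_mulVecLin_map_eq_range_of_isFractionRing {S K : Type*} [CommRing S] [Field K]
    [Algebra S K] [IsFractionRing S K] [Fintype m] (A : Matrix l m S) (B : Matrix m n S)
    (h : LinearMap.ker A.mulVecLin = LinearMap.range B.mulVecLin) :
    LinearMap.ker (A.map (algebraMap S K)).mulVecLin =
      LinearMap.range (B.map (algebraMap S K)).mulVecLin := by
  set f := algebraMap S K
  refine le_antisymm (fun v hv => ?_) ?_
  · obtain ⟨d, hd⟩ := IsLocalization.exist_integer_multiples_of_finite (nonZeroDivisors S) v
    choose u hu using hd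
    have hfu : f ∘ u = f d • v := funext fun i => by
      rw [Function.comp_apply, hu i, Algebra.smul_def]; rfl
    have hAu : u ∈ LinearMap.ker A.mulVecLin := by
      rw [LinearMap.mem_ker, mulVecLin_apply]
      funext i
      apply IsFractionRing.injective S K
      rw [LinearMap.mem_ker, mulVecLin_apply] at hv
      rw [RingHom.map_mulVec, hfu, mulVec_smul, hv, smul_zero, Pi.zero_apply, Pi.zero_apply,
        map_zero]
    rw [h] at hAu
    obtain ⟨w, hw⟩ := hAu
    have hd0 : f d ≠ 0 := (IsLocalization.map_units K d).ne_zero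
    refine ⟨(f d)⁻¹ • (f ∘ w), ?_⟩
    funext i
    rw [mulVecLin_apply, mulVec_smul, Pi.smul_apply, ← RingHom.map_mulVec, ← mulVecLin_apply,
      hw, show f (u i) = f d • v i from congrFun hfu i, inv_smul_smul₀ hd0]
  · rw [range_mulVecLin_le_ker_iff, ← Matrix.map_mul, (range_mulVecLin_le_ker_iff A B).1 h.ge,
      Matrix.map_zero _ (map_zero f)]

end Matrix

open Matrix

theorem stmt11_general (R : Type) [CommRing R]
    (εR : R →+* ℤ)
    (G : Subgroup Rˣ) (hεRG : ∀ u : Rˣ, u ∈ G → εR (u : R) = 1)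
    (Q : Type) [Field Q] [Algebra R Q] [IsFractionRing R Q]
    (A : Type) [CommGroup A] (φ : A →* Rˣ) (hφ : ∀ a, φ a ∈ G)
    -- the augmentation of `ℤ[A]`:
    (ε : MonoidAlgebra ℤ A →+* ℤ) (hε : ∀ a : A, ε (MonoidAlgebra.of ℤ A a) = 1)
    -- the ring homomorphism `φ_Q : ℤ[A] → Q` induced by `φ`:
    (φQ : MonoidAlgebra ℤ A →+* Q)
    (hφQ : ∀ a : A, φQ (MonoidAlgebra.of ℤ A a) = algebraMap R Q ((φ a : Rˣ) : R))
    -- a bounded chain complex of f.g. free based `ℤ[A]`-modules, via its differentials: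
    (n : ℤ → ℕ)
    (D : ∀ i : ℤ, Matrix (Fin (n i)) (Fin (n (i + 1))) (MonoidAlgebra ℤ A))
    (hDD : ∀ i : ℤ, D i * D (i + 1) = 0)
    -- `ℤ ⊗_{ℤ[A]} C` is acyclic:
    (hZacyclic : ∀ i : ℤ,
      LinearMap.ker (Matrix.mulVecLin ((D i).map ε)) =
        LinearMap.range (Matrix.mulVecLin ((D (i + 1)).map ε))) :
    -- then `Q ⊗_{ℤ[A]} C` is acyclic:
    ∀ i : ℤ,
      LinearMap.ker (Matrix.mulVecLin ((D i).map φQ)) =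
        LinearMap.range (Matrix.mulVecLin ((D (i + 1)).map φQ)) := by
  let φR : MonoidAlgebra ℤ A →+* R :=
    (MonoidAlgebra.lift ℤ R A ((Units.coeHom R).comp φ)).toRingHom
  have hεφR : ε = εR.comp φR :=
    MonoidAlgebra.ringHom_ext' (Subsingleton.elim _ _)
      (MonoidHom.ext fun a => by simpa [φR, hεRG _ (hφ a)] using hε a)
  have hφQφR : φQ = (algebraMap R Q).comp φR :=
    MonoidAlgebra.ringHom_ext' (Subsingleton.elim _ _)
      (MonoidHom.ext fun a => by simpa [φR] using hφQ a)
  let εQ : MonoidAlgebra ℤ A →+* ℚ := (algebraMap ℤ ℚ).comp ε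
  have hφQ_ne_zero : ∀ x, εQ x ≠ 0 → φQ x ≠ 0 := fun x hx hφx => hx <| by
    rw [hφQφR, RingHom.comp_apply, map_eq_zero_iff _ (IsFractionRing.injective R Q)] at hφx
    simp [εQ, hεφR, hφx]
  have hεQ_exact : ∀ i, LinearMap.ker ((D i).map εQ).mulVecLin =
      LinearMap.range ((D (i + 1)).map εQ).mulVecLin := fun i => by
    simpa only [εQ, RingHom.coe_comp, ← Matrix.map_map] using
      ker_mulVecLin_map_eq_range_of_isFractionRing (K := ℚ) _ _ (hZacyclic i)
  intro i
  exact ker_mulVecLin_map_eq_range_of_ne_zero εQ φQ hφQ_ne_zero _ _ (hDD i) (hεQ_exact i)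

/-- if a bounded based chain complex of finitely generated free
`ℤ[A]`-modules (given by its matrices of differentials `D i`) becomes acyclic after
applying the augmentation `ε : ℤ[A] → ℤ`, then it is acyclic after applying the
homomorphism `φ_Q : ℤ[A] → Q` induced by `φ : A → G ⊆ R^×`, where `Q = Frac(R)`. -/
theorem stmt11 (R : Type) [CommRing R] [IsDomain R]
    (εR : R →+* ℤ) (σ : R →+* R) (hσ : ∀ r, σ (σ r) = r)
    (G : Subgroup Rˣ) (hεRG : ∀ u : Rˣ, u ∈ G → εR (u : R) = 1)
    (Q : Type) [Field Q] [Algebra R Q] [IsFractionRing R Q]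
    (A : Type) [CommGroup A] (φ : A →* Rˣ) (hφ : ∀ a, φ a ∈ G)
    -- the augmentation of `ℤ[A]`:
    (ε : MonoidAlgebra ℤ A →+* ℤ) (hε : ∀ a : A, ε (MonoidAlgebra.of ℤ A a) = 1)
    -- the ring homomorphism `φ_Q : ℤ[A] → Q` induced by `φ`:
    (φQ : MonoidAlgebra ℤ A →+* Q)
    (hφQ : ∀ a : A, φQ (MonoidAlgebra.of ℤ A a) = algebraMap R Q ((φ a : Rˣ) : R))
    -- a bounded chain complex of f.g. free based `ℤ[A]`-modules, via its differentials:
    (n : ℤ → ℕ) (N : ℕ) (hbdd : ∀ i : ℤ, (N : ℤ) < |i| → n i = 0)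
    (D : ∀ i : ℤ, Matrix (Fin (n i)) (Fin (n (i + 1))) (MonoidAlgebra ℤ A))
    (hDD : ∀ i : ℤ, D i * D (i + 1) = 0)
    -- `ℤ ⊗_{ℤ[A]} C` is acyclic:
    (hZacyclic : ∀ i : ℤ,
      LinearMap.ker (Matrix.mulVecLin ((D i).map ε)) =
        LinearMap.range (Matrix.mulVecLin ((D (i + 1)).map ε))) :
    -- then `Q ⊗_{ℤ[A]} C` is acyclic:
    ∀ i : ℤ,
      LinearMap.ker (Matrix.mulVecLin ((D i).map φQ)) =
        LinearMap.range (Matrix.mulVecLin ((D (i + 1)).map φQ)) :=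
  stmt11_general R εR G hεRG Q A φ hφ ε hε φQ hφQ n D hDD hZacyclic
end

section
/- Let R be a Noetherian UFD (e.g. the group ring ℤ[G] of a finitely generated free abelian group G) with fraction field Q. Let H be a finitely generated R-module admitting a presentation ⟨γ₁,…,γ_{g+r} | ρ₁,…,ρ_r⟩ of deficiency g, and let 𝒜 : Λ^g H → R be the associated Alexander function defined by 𝒜(u₁∧…∧u_g) · γ₁∧…∧γ_{g+r} = ρ₁∧…∧ρ_r∧ũ₁∧…∧ũ_g in Λ^{g+r}Γ, where Γ is the free R-module on γ₁,…,γ_{g+r} and ũᵢ are arbitrary lifts of uᵢ. Suppose dim_Q(Q ⊗_R H) = g, and suppose w₁,…,w_g ∈ H generate Q ⊗_R H over Q. Then for all y₁,…,y_g ∈ H: 𝒜(y₁∧…∧y_g) = ord(H/⟨w₁,…,w_g⟩) · det(M) up to multiplication by a unit, where M is the matrix expressing the images of y₁,…,y_g in Q ⊗_R H in the basis given by w₁,…,w_g, and ord denotes the order (first elementary ideal generator) of the finitely generated torsion R-module H/⟨w₁,…,w_g⟩. -/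
/-!
Lifting `u₁, …, u_g` to `x₁, …, x_g`, the Alexander function is the determinant of the square
matrix with rows `ρ₁, …, ρ_r, x₁, …, x_g`, so it is an alternating `g`-form on `H`. Over the
fraction field an alternating `g`-form transforms by `det M` under a change of `g` vectors (clear
denominators, and kill the torsion error terms by nonzero scalars), hence `𝒜(y) = det M · 𝒜(w)`.
Finally, lifting the `wᵢ` gives a square presentation of `H/⟨w⟩` whose relation matrix is exactly
the matrix computing `𝒜(w)`, so `𝒜(w)` is an order of `H/⟨w⟩`; that it is associated to any other
order is the presentation independence of the zeroth Fitting ideal.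
-/

open TensorProduct

/-- `Δ` is an order of the finitely generated `R`-module `N`: for some (square-free style)
finite presentation of `N` with `m` generators and relation vectors `P`, `Δ` is a gcd of
the `m × m` minors of the presentation matrix. -/
def IsOrderOf (R : Type) [CommRing R] (N : Type) [AddCommGroup N] [Module R N]
    (Δ : R) : Prop :=
  ∃ (m k : ℕ) (q : (Fin m → R) →ₗ[R] N) (P : Fin k → (Fin m → R)),
    Function.Surjective q ∧
    LinearMap.ker q = Submodule.span R (Set.range P) ∧
    (∀ c : R, (∃ s : Fin m → Fin k, c = Matrix.det (Matrix.of fun i j => P (s i) j)) →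
      Δ ∣ c) ∧
    (∀ e : R,
      (∀ c : R, (∃ s : Fin m → Fin k, c = Matrix.det (Matrix.of fun i j => P (s i) j)) →
        e ∣ c) → e ∣ Δ)

open Matrix
open LinearMap (funLeft)

namespace AlternatingMap

variable {R : Type*} [CommRing R] {M H N : Type*} [AddCommGroup M] [Module R M]
  [AddCommGroup H] [Module R H] [AddCommGroup N] [Module R N] {ι : Type*}

theorem apply_sum_smul_eq_det_mul [Fintype ι] [DecidableEq ι] (f : M [⋀^ι]→ₗ[R] R)
    (B : Matrix ι ι R) (v : ι → M) : f (fun i => ∑ j, B i j • v j) = B.det * f v := by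
  have h := congr($((f.compLinearMap (Fintype.linearCombination R v)).eq_smul_basis_det
    (Pi.basisFun R ι)) (of.symm B))
  simp only [compLinearMap_apply, smul_apply, Fintype.linearCombination_apply, Pi.basisFun_apply,
    Pi.single_apply, ite_smul, one_smul, zero_smul, Finset.sum_ite_eq', Finset.mem_univ, if_true,
    Pi.basisFun_det, smul_eq_mul] at h
  exact h.trans (mul_comm _ _)

def ofSurjective (pr : M →ₗ[R] H) (hpr : Function.Surjective pr) (F : M [⋀^ι]→ₗ[R] N)
    (A : (ι → H) → N) (hA : ∀ x, A (pr ∘ x) = F x) : H [⋀^ι]→ₗ[R] N where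
  toFun := A
  map_update_add' u i a b := by
    obtain ⟨x, rfl⟩ := hpr.comp_left u
    obtain ⟨a, rfl⟩ := hpr a
    obtain ⟨b, rfl⟩ := hpr b
    simp only [← map_add, ← Function.comp_update, hA, F.map_update_add]
  map_update_smul' u i c a := by
    obtain ⟨x, rfl⟩ := hpr.comp_left u
    obtain ⟨a, rfl⟩ := hpr a
    simp only [← map_smul, ← Function.comp_update, hA, F.map_update_smul]
  map_eq_zero_of_eq' u i j hij hne := by
    have hu : u = pr ∘ (Function.surjInv hpr ∘ u) :=
      funext fun k => (Function.surjInv_eq hpr (u k)).symm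
    rw [hu, hA]
    exact F.map_eq_zero_of_eq _ (by simp [hij]) hne

end AlternatingMap

section Localization

variable {R : Type*} [CommRing R] (S : Submonoid R) {Q : Type*} [CommRing Q] [Algebra R Q]
  {H : Type*} [AddCommGroup H] [Module R H]

theorem exists_mem_smul_eq_sum_of_one_tmul_eq [IsLocalization S Q] {ι : Type*} [Fintype ι]
    {y : H} {w : ι → H} {m : ι → Q} (h : (1 : Q) ⊗ₜ[R] y = ∑ j, m j • (1 : Q) ⊗ₜ[R] w j) :
    ∃ a ∈ S, ∃ n : ι → R, a • y = ∑ j, n j • w j ∧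
      ∀ j, algebraMap R Q (n j) = algebraMap R Q a * m j := by
  have : IsLocalizedModule S (TensorProduct.mk R Q H 1) :=
    (isLocalizedModule_iff_isBaseChange S Q _).2 (TensorProduct.isBaseChange R H Q)
  obtain ⟨d, hd⟩ := IsLocalization.exist_integer_multiples_of_finite S m
  choose n hn using hd
  obtain ⟨c, hc⟩ := (IsLocalizedModule.eq_zero_iff S (TensorProduct.mk R Q H 1)).1
    (show (1 : Q) ⊗ₜ[R] ((d : R) • y - ∑ j, n j • w j) = 0 by
      simp only [tmul_sub, tmul_sum, tmul_smul, h, Finset.smul_sum, ← Finset.sum_sub_distrib]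
      refine Finset.sum_eq_zero fun j _ => ?_
      rw [← smul_assoc, ← hn, algebraMap_smul, sub_self])
  refine ⟨c * d, mul_mem c.2 d.2, fun j => c * n j, ?_, fun j => ?_⟩
  · rw [Submonoid.smul_def, smul_sub, sub_eq_zero] at hc
    simpa [mul_smul, Finset.smul_sum] using hc
  · rw [map_mul, hn, map_mul, Algebra.smul_def, mul_assoc]

theorem AlternatingMap.algebraMap_apply_eq_det_mul [IsLocalization S Q] {ι : Type*} [Fintype ι]
    [DecidableEq ι] (f : H [⋀^ι]→ₗ[R] R) {y w : ι → H} {M : Matrix ι ι Q}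
    (h : ∀ i, (1 : Q) ⊗ₜ[R] y i = ∑ j, M i j • (1 : Q) ⊗ₜ[R] w j) :
    algebraMap R Q (f y) = M.det * algebraMap R Q (f w) := by
  choose a ha n hn hnM using fun i => exists_mem_smul_eq_sum_of_one_tmul_eq S (h i)
  have hR : (∏ i, a i) * f y = (of n).det * f w := by
    rw [← smul_eq_mul, ← f.map_smul_univ, funext hn, ← f.apply_sum_smul_eq_det_mul]
    rfl
  have hQ : (of n).map (algebraMap R Q) = diagonal (fun i => algebraMap R Q (a i)) * M := by
    ext i j
    simp [hnM, diagonal_mul]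
  have hunit : IsUnit (algebraMap R Q (∏ i, a i)) :=
    IsLocalization.map_units Q ⟨_, prod_mem fun i _ => ha i⟩
  apply hunit.mul_left_cancel
  calc algebraMap R Q (∏ i, a i) * algebraMap R Q (f y)
      = ((of n).map (algebraMap R Q)).det * algebraMap R Q (f w) := by
        rw [← map_mul, hR, map_mul, RingHom.map_det, RingHom.mapMatrix_apply]
    _ = algebraMap R Q (∏ i, a i) * (M.det * algebraMap R Q (f w)) := by
        rw [hQ, det_mul, det_diagonal, map_prod, mul_assoc]

end Localization

section Fitting

variable {R : Type*} [CommRing R] {N : Type*} [AddCommGroup N] [Module R N]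

/-- `e` divides the zeroth Fitting ideal of `N`, computed from the presentation `q`. -/
def DvdKerDet {ι : Type*} [Fintype ι] [DecidableEq ι] (q : (ι → R) →ₗ[R] N) (e : R) : Prop :=
  ∀ T : Matrix ι ι R, (∀ i, q (T i) = 0) → e ∣ T.det

section

variable {ι κ : Type*} [Fintype ι] [DecidableEq ι] [Fintype κ] [DecidableEq κ]
  {q : (ι → R) →ₗ[R] N} {e : R}

theorem DvdKerDet.comp_mulVecLin (h : DvdKerDet q e) {A : Matrix ι ι R} (hA : IsUnit A.det) :
    DvdKerDet (q ∘ₗ A.mulVecLin) e := by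
  intro T hT
  have hTA : e ∣ (T * Aᵀ).det := h _ fun i => by
    rw [mul_apply_eq_vecMul, ← mulVec_transpose, transpose_transpose]
    exact hT i
  rwa [det_mul, det_transpose, hA.dvd_mul_right] at hTA

theorem dvdKerDet_comp_mulVecLin_iff {A : Matrix ι ι R} (hA : IsUnit A.det) :
    DvdKerDet (q ∘ₗ A.mulVecLin) e ↔ DvdKerDet q e := by
  refine ⟨fun h => ?_, fun h => h.comp_mulVecLin hA⟩
  simpa [LinearMap.comp_assoc, ← mulVecLin_mul, A.mul_nonsing_inv hA] using
    h.comp_mulVecLin (A.isUnit_nonsing_inv_det hA)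

theorem DvdKerDet.comp_funLeft (h : DvdKerDet q e) (σ : ι ≃ κ) :
    DvdKerDet (q ∘ₗ funLeft R R σ) e := by
  intro T hT
  rw [← det_submatrix_equiv_self σ]
  exact h _ fun i => hT (σ i)

theorem dvdKerDet_comp_funLeft_iff (σ : ι ≃ κ) :
    DvdKerDet (q ∘ₗ funLeft R R σ) e ↔ DvdKerDet q e := by
  refine ⟨fun h => ?_, fun h => h.comp_funLeft σ⟩
  have h' := h.comp_funLeft σ.symm
  rwa [LinearMap.comp_assoc, ← LinearMap.funLeft_comp, σ.symm_comp_self] at h'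

theorem DvdKerDet.of_comp_funLeft_inl
    (h : DvdKerDet (q ∘ₗ funLeft R R (Sum.inl : ι → ι ⊕ κ)) e) : DvdKerDet q e := by
  intro T hT
  simpa [det_fromBlocks_zero₂₁] using h (fromBlocks T 0 0 1) <| by
    rintro (i | k)
    · exact hT i
    · exact q.map_zero

def sumCoprod (q₁ : (ι → R) →ₗ[R] N) (q₂ : (κ → R) →ₗ[R] N) : (ι ⊕ κ → R) →ₗ[R] N :=
  q₁ ∘ₗ funLeft R R Sum.inl + q₂ ∘ₗ funLeft R R Sum.inr

theorem sumCoprod_comp_funLeft_sumComm (q₁ : (ι → R) →ₗ[R] N) (q₂ : (κ → R) →ₗ[R] N) :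
    sumCoprod q₂ q₁ ∘ₗ funLeft R R (Equiv.sumComm κ ι) = sumCoprod q₁ q₂ := by
  ext u
  exact add_comm _ _

theorem comp_funLeft_inl_comp_mulVecLin_fromBlocks {q₂ : (κ → R) →ₗ[R] N} {Φ : Matrix ι κ R}
    (hΦ : q ∘ₗ Φ.mulVecLin = q₂) :
    q ∘ₗ funLeft R R Sum.inl ∘ₗ (fromBlocks 1 Φ 0 (1 : Matrix κ κ R)).mulVecLin =
      sumCoprod q q₂ := by
  refine LinearMap.ext fun u => ?_
  simp only [sumCoprod, LinearMap.comp_apply, mulVecLin_apply, fromBlocks_mulVec, ← hΦ,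
    one_mulVec, zero_mulVec, zero_add, LinearMap.add_apply]
  exact map_add q _ _

end

section

variable {m n : ℕ} {q : (Fin m → R) →ₗ[R] N} {e : R}

theorem DvdKerDet.comp_funLeft_castSucc (h : DvdKerDet q e) :
    DvdKerDet (q ∘ₗ funLeft R R Fin.castSucc) e := by
  intro T hT
  rw [det_succ_column T (Fin.last m)]
  refine Finset.dvd_sum fun i _ => Dvd.dvd.mul_left (h _ fun k => ?_) _
  rw [Fin.succAbove_last]
  exact hT (i.succAbove k)

theorem DvdKerDet.comp_funLeft_castAdd (h : DvdKerDet q e) (n : ℕ) :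
    DvdKerDet (q ∘ₗ funLeft R R (Fin.castAdd n)) e := by
  induction n with
  | zero => exact h
  | succ n ih => exact ih.comp_funLeft_castSucc

theorem dvdKerDet_comp_funLeft_inl_iff :
    DvdKerDet (q ∘ₗ funLeft R R (Sum.inl : Fin m → Fin m ⊕ Fin n)) e ↔ DvdKerDet q e := by
  refine ⟨DvdKerDet.of_comp_funLeft_inl, fun h => ?_⟩
  simpa [LinearMap.comp_assoc, ← LinearMap.funLeft_comp, Function.comp_def] using
    (h.comp_funLeft_castAdd n).comp_funLeft finSumFinEquiv.symm

/-- Adjoining generators to a presentation does not change its Fitting ideal. -/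
theorem dvdKerDet_sumCoprod_iff (hq : Function.Surjective q) (q₂ : (Fin n → R) →ₗ[R] N) :
    DvdKerDet (sumCoprod q q₂) e ↔ DvdKerDet q e := by
  obtain ⟨φ, hφ⟩ := Module.projective_lifting_property q q₂ hq
  rw [← comp_funLeft_inl_comp_mulVecLin_fromBlocks (Φ := LinearMap.toMatrix' φ)
      (by rwa [← toLin'_apply', toLin'_toMatrix']),
    ← LinearMap.comp_assoc, dvdKerDet_comp_mulVecLin_iff (by simp),
    dvdKerDet_comp_funLeft_inl_iff]

theorem dvdKerDet_iff_of_surjective {q₂ : (Fin n → R) →ₗ[R] N} (hq : Function.Surjective q)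
    (hq₂ : Function.Surjective q₂) : DvdKerDet q e ↔ DvdKerDet q₂ e := by
  rw [← dvdKerDet_sumCoprod_iff hq q₂, ← sumCoprod_comp_funLeft_sumComm,
    dvdKerDet_comp_funLeft_iff, dvdKerDet_sumCoprod_iff hq₂]

end

theorem Matrix.det_of_sum_smul {ι κ : Type*} [Fintype ι] [DecidableEq ι] [Fintype κ]
    (c : ι → κ → R) (P : κ → ι → R) :
    (of fun i => ∑ t, c i t • P t).det =
      ∑ s : ι → κ, (∏ i, c i (s i)) * (of fun i => P (s i)).det := by
  change (detRowAlternating : (ι → R) [⋀^ι]→ₗ[R] R).toMultilinearMap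
    (fun i => ∑ t, c i t • P t) = _
  rw [MultilinearMap.map_sum]
  exact Finset.sum_congr rfl fun s _ => MultilinearMap.map_smul_univ _ _ _

theorem dvdKerDet_of_ker_eq_span {ι κ : Type*} [Fintype ι] [DecidableEq ι] [Fintype κ]
    {q : (ι → R) →ₗ[R] N} {P : κ → ι → R}
    (hker : LinearMap.ker q = Submodule.span R (Set.range P)) {e : R}
    (he : ∀ s : ι → κ, e ∣ (of fun i => P (s i)).det) : DvdKerDet q e := by
  intro T hT
  have hspan : ∀ i, ∃ c : κ → R, ∑ t, c t • P t = T i := fun i =>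
    (Submodule.mem_span_range_iff_exists_fun R).1 (hker ▸ hT i)
  choose c hc using hspan
  have hTc : T = of fun i => ∑ t, c i t • P t := funext fun i => (hc i).symm
  rw [hTc, det_of_sum_smul]
  exact Finset.dvd_sum fun s _ => (he s).mul_left _

theorem Matrix.det_dvd_det_submatrix_id {n : Type*} [Fintype n] [DecidableEq n]
    (A : Matrix n n R) (s : n → n) : A.det ∣ (A.submatrix s id).det := by
  by_cases hs : Function.Injective s
  · have hσ : A.submatrix s id = A.submatrix (Equiv.ofBijective s hs.bijective_of_finite) id :=
      rfl
    rw [hσ, det_permute]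
    exact dvd_mul_left _ _
  · obtain ⟨i, j, hij, hne⟩ := Function.not_injective_iff.1 hs
    rw [det_zero_of_row_eq (M := A.submatrix s id) hne (funext fun k => by simp [hij])]
    exact dvd_zero _

theorem IsOrderOf.associated_det {R : Type} [CommRing R] [IsDomain R] {N : Type}
    [AddCommGroup N] [Module R N] {Δ : R} (hΔ : IsOrderOf R N Δ) {n : ℕ}
    {q : (Fin n → R) →ₗ[R] N} (hq : Function.Surjective q) {T : Matrix (Fin n) (Fin n) R}
    (hker : LinearMap.ker q = Submodule.span R (Set.range T)) : Associated Δ T.det := by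
  obtain ⟨m, k, qP, P, hqP, hkerP, hΔP, hΔgcd⟩ := hΔ
  have hT : ∀ i, q (T i) = 0 := fun i =>
    LinearMap.mem_ker.1 <| hker ▸ Submodule.subset_span ⟨i, rfl⟩
  have hP : ∀ t, qP (P t) = 0 := fun t =>
    LinearMap.mem_ker.1 <| hkerP ▸ Submodule.subset_span ⟨t, rfl⟩
  refine associated_of_dvd_dvd ?_ ?_
  · have hΔqP : DvdKerDet qP Δ := dvdKerDet_of_ker_eq_span hkerP fun s => hΔP _ ⟨s, rfl⟩
    exact (dvdKerDet_iff_of_surjective hqP hq).1 hΔqP T hT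
  · have hTq : DvdKerDet q T.det :=
      dvdKerDet_of_ker_eq_span hker fun s => T.det_dvd_det_submatrix_id s
    exact hΔgcd _ fun c ⟨s, hc⟩ =>
      hc ▸ (dvdKerDet_iff_of_surjective hq hqP).1 hTq _ fun i => hP (s i)

end Fitting

section Alexander

variable {R : Type*} {g r : ℕ}

def stackRows (rel : Fin r → Fin (g + r) → R) (x : Fin g → Fin (g + r) → R) :
    Matrix (Fin (g + r)) (Fin (g + r)) R :=
  of fun i => Fin.append rel x (finCongr (Nat.add_comm g r) i)

theorem range_stackRows (rel : Fin r → Fin (g + r) → R) (x : Fin g → Fin (g + r) → R) :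
    Set.range (stackRows rel x) = Set.range rel ∪ Set.range x := by
  change Set.range (Fin.append rel x ∘ finCongr (Nat.add_comm g r)) = _
  rw [EquivLike.range_comp]
  ext v
  constructor
  · rintro ⟨i, rfl⟩
    induction i using Fin.addCases <;> simp
  · rintro (⟨i, rfl⟩ | ⟨j, rfl⟩)
    exacts [⟨_, Fin.append_left rel x i⟩, ⟨_, Fin.append_right rel x j⟩]

variable [CommRing R]

/-- The coefficient of the standard volume element in the top exterior power of `Rⁿ`. -/
noncomputable def topCoeff (n : ℕ) : ExteriorAlgebra R (Fin n → R) →ₗ[R] R :=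
  ExteriorAlgebra.liftAlternating fun m =>
    if h : m = n then detRowAlternating.domDomCongr (finCongr h).symm else 0

theorem topCoeff_ιMulti {m n : ℕ} (h : m = n) (v : Fin m → Fin n → R) :
    topCoeff n (ExteriorAlgebra.ιMulti R m v) = (of fun i => v (finCongr h.symm i)).det := by
  rw [topCoeff, ExteriorAlgebra.liftAlternating_apply_ιMulti, dif_pos h]
  rfl

theorem topCoeff_ιMulti_single (n : ℕ) :
    topCoeff n (ExteriorAlgebra.ιMulti R n fun i => Pi.single i (1 : R)) = 1 := by
  rw [topCoeff_ιMulti rfl]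
  convert (det_one : det (1 : Matrix (Fin n) (Fin n) R) = 1) using 2
  ext i j
  simp [one_apply, Pi.single_apply, eq_comm]

noncomputable def wedgeForm (rel : Fin r → Fin (g + r) → R) :
    (Fin (g + r) → R) [⋀^Fin g]→ₗ[R] R :=
  (topCoeff (g + r) ∘ₗ LinearMap.mulLeft R (ExteriorAlgebra.ιMulti R r rel)).compAlternatingMap
    (ExteriorAlgebra.ιMulti R g)

theorem wedgeForm_apply (rel : Fin r → Fin (g + r) → R) (x : Fin g → Fin (g + r) → R) :
    wedgeForm rel x = (stackRows rel x).det := by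
  have happend : ExteriorAlgebra.ιMulti R r rel * ExteriorAlgebra.ιMulti R g x =
      ExteriorAlgebra.ιMulti R (r + g) (Fin.append rel x) := by
    have hcomp : (fun i => ExteriorAlgebra.ι R (Fin.append rel x i)) =
        Fin.append (fun i => ExteriorAlgebra.ι R (rel i)) fun i => ExteriorAlgebra.ι R (x i) := by
      funext i
      refine Fin.addCases (fun i => ?_) (fun i => ?_) i <;> simp
    simp only [ExteriorAlgebra.ιMulti_apply, hcomp, List.ofFn_fin_append, List.prod_append]
  rw [wedgeForm, LinearMap.compAlternatingMap_apply, LinearMap.comp_apply,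
    LinearMap.mulLeft_apply, happend, topCoeff_ιMulti (Nat.add_comm r g)]
  rfl

theorem eq_wedgeForm_of_wedge_eq {rel : Fin r → Fin (g + r) → R} {x : Fin g → Fin (g + r) → R}
    {a : R}
    (h : (List.ofFn fun i => ExteriorAlgebra.ι R (rel i)).prod *
        (List.ofFn fun i => ExteriorAlgebra.ι R (x i)).prod =
      a • (List.ofFn fun i : Fin (g + r) => ExteriorAlgebra.ι R (Pi.single i (1 : R))).prod) :
    a = wedgeForm rel x := by
  have h' := congr(topCoeff (g + r) $h)
  simp only [← ExteriorAlgebra.ιMulti_apply, map_smul, topCoeff_ιMulti_single, smul_eq_mul,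
    mul_one] at h'
  exact h'.symm

end Alexander

theorem ker_mkQ_comp_eq_span {R M H : Type*} [CommRing R] [AddCommGroup M] [Module R M]
    [AddCommGroup H] [Module R H] {pr : M →ₗ[R] H} {rel : Set M}
    (hker : LinearMap.ker pr = Submodule.span R rel) {ι : Type*} (ℓ : ι → M) :
    LinearMap.ker ((Submodule.span R (Set.range (pr ∘ ℓ))).mkQ ∘ₗ pr) =
      Submodule.span R (rel ∪ Set.range ℓ) := by
  rw [LinearMap.ker_comp, Submodule.ker_mkQ, Set.range_comp, ← Submodule.map_span,
    Submodule.comap_map_eq, hker, Submodule.span_union, sup_comm]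

theorem stmt14_general (R : Type) [CommRing R] [IsDomain R]
    (Q : Type) [Field Q] [Algebra R Q] [IsFractionRing R Q]
    (H : Type) [AddCommGroup H] [Module R H]
    (g r : ℕ)
    -- a presentation `⟨γ₁,…,γ_{g+r} | rel₁,…,rel_r⟩` of `H` of deficiency `g`:
    (pr : (Fin (g + r) → R) →ₗ[R] H) (hpr : Function.Surjective pr)
    (rel : Fin r → (Fin (g + r) → R))
    (hker : LinearMap.ker pr = Submodule.span R (Set.range rel))
    -- the Alexander function `𝒜 : Λ^g H → R` of this presentation:
    (Alex : (Fin g → H) → R)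
    (hAlex : ∀ (u : Fin g → H) (lift : Fin g → (Fin (g + r) → R)),
      (∀ i, pr (lift i) = u i) →
      (List.ofFn fun i => ExteriorAlgebra.ι R (rel i)).prod *
          (List.ofFn fun i => ExteriorAlgebra.ι R (lift i)).prod =
        Alex u • (List.ofFn fun i : Fin (g + r) =>
          ExteriorAlgebra.ι R (Pi.single i (1 : R))).prod)
    (w : Fin g → H)
    -- `Δ` is the order of `H / ⟨w₁, …, w_g⟩`:
    (Δ : R) (hΔ : IsOrderOf R (H ⧸ Submodule.span R (Set.range w)) Δ) :
    ∃ u : Rˣ, ∀ (y : Fin g → H) (M : Matrix (Fin g) (Fin g) Q),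
      (∀ i, (1 : Q) ⊗ₜ[R] y i = ∑ j, M i j • ((1 : Q) ⊗ₜ[R] w j)) →
      algebraMap R Q (Alex y) = algebraMap R Q ((u : R) * Δ) * M.det := by
  have hAlex' : ∀ x, Alex (pr ∘ x) = wedgeForm rel x := fun x =>
    eq_wedgeForm_of_wedge_eq (hAlex _ x fun _ => rfl)
  choose ℓ hℓ using fun i => hpr (w i)
  have hw : pr ∘ ℓ = w := funext hℓ
  obtain ⟨u, hu⟩ : Associated Δ (Alex w) := by
    rw [← hw, hAlex', wedgeForm_apply]
    refine hΔ.associated_det (q := (Submodule.span R (Set.range w)).mkQ ∘ₗ pr)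
      ((Submodule.mkQ_surjective _).comp hpr) ?_
    rw [← hw, ker_mkQ_comp_eq_span hker, range_stackRows]
  let alexForm : H [⋀^Fin g]→ₗ[R] R :=
    AlternatingMap.ofSurjective pr hpr (wedgeForm rel) Alex hAlex'
  refine ⟨u, fun y M hyM => ?_⟩
  rw [mul_comm (u : R), hu, mul_comm _ M.det]
  exact alexForm.algebraMap_apply_eq_det_mul (nonZeroDivisors R) hyM

/-- computation of the Alexander function.  If `H` has a presentation of
deficiency `g`, `dim_Q(Q ⊗ H) = g` and `w₁, …, w_g ∈ H` generate `Q ⊗ H`, then for all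
`y₁, …, y_g ∈ H`, up to a unit, `𝒜(y₁ ∧ … ∧ y_g) = ord(H/⟨w⟩) · det(M)` where `M`
expresses the images of the `yᵢ` in the basis `w` of `Q ⊗ H`. -/
theorem stmt14 (R : Type) [CommRing R] [IsDomain R] [IsNoetherianRing R]
    [UniqueFactorizationMonoid R]
    (Q : Type) [Field Q] [Algebra R Q] [IsFractionRing R Q]
    (H : Type) [AddCommGroup H] [Module R H] [Module.Finite R H]
    (g r : ℕ)
    -- a presentation `⟨γ₁,…,γ_{g+r} | rel₁,…,rel_r⟩` of `H` of deficiency `g`: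
    (pr : (Fin (g + r) → R) →ₗ[R] H) (hpr : Function.Surjective pr)
    (rel : Fin r → (Fin (g + r) → R))
    (hker : LinearMap.ker pr = Submodule.span R (Set.range rel))
    -- the Alexander function `𝒜 : Λ^g H → R` of this presentation:
    (Alex : (Fin g → H) → R)
    (hAlex : ∀ (u : Fin g → H) (lift : Fin g → (Fin (g + r) → R)),
      (∀ i, pr (lift i) = u i) →
      (List.ofFn fun i => ExteriorAlgebra.ι R (rel i)).prod *
          (List.ofFn fun i => ExteriorAlgebra.ι R (lift i)).prod =
        Alex u • (List.ofFn fun i : Fin (g + r) =>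
          ExteriorAlgebra.ι R (Pi.single i (1 : R))).prod)
    -- `dim_Q (Q ⊗_R H) = g`:
    (hdim : Module.finrank Q (Q ⊗[R] H) = g)
    -- `w₁, …, w_g` generate `Q ⊗_R H` over `Q`:
    (w : Fin g → H)
    (hw : Submodule.span Q (Set.range fun i => (1 : Q) ⊗ₜ[R] w i) = ⊤)
    -- `Δ` is the order of `H / ⟨w₁, …, w_g⟩`:
    (Δ : R) (hΔ : IsOrderOf R (H ⧸ Submodule.span R (Set.range w)) Δ) :
    ∃ u : Rˣ, ∀ (y : Fin g → H) (M : Matrix (Fin g) (Fin g) Q),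
      (∀ i, (1 : Q) ⊗ₜ[R] y i = ∑ j, M i j • ((1 : Q) ⊗ₜ[R] w j)) →
      algebraMap R Q (Alex y) = algebraMap R Q ((u : R) * Δ) * M.det :=
  stmt14_general R Q H g r pr hpr rel hker Alex hAlex w Δ hΔ
end

section
/- Let R be an integral domain with fraction field Q, let H be a finitely generated R-module with dim_Q(Q⊗_R H) = g, admitting a presentation of deficiency g, with Alexander function 𝒜 : Λ^g H → R. Then 𝒜 ≠ 0. Conversely, if H admits a presentation of deficiency g and dim_Q(Q⊗_R H) ≠ g (equivalently > g), then 𝒜 = 0. -/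
open TensorProduct

/-!
Expanding the exterior products in the standard basis, `𝒜(u)` is the determinant of the square
matrix whose rows are the relations followed by lifts of the `uᵢ`. By rank–nullity over the
domain `R`, and since rank is invariant under base change to `Q`, `dim_Q (Q ⊗ H) = g` exactly
when the relations are linearly independent. If they are dependent, every such determinant
vanishes. If they are independent, over `Q` they can be completed to a basis by `g` standard
basis vectors, whose images in `H` give a nonzero value of `𝒜`.
-/

theorem ExteriorAlgebra.det_eq_of_ιMulti_eq_smul {R : Type*} [CommRing R] {n : ℕ}
    {v : Fin n → Fin n → R} {c : R}
    (h : ιMulti R n v = c • ιMulti R n (fun i => Pi.single i 1)) :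
    (Matrix.of v).det = c := by
  classical
  have := congrArg (liftAlternating (Function.update 0 n (Pi.basisFun R (Fin n)).det)) h
  rwa [map_smul, liftAlternating_apply_ιMulti, liftAlternating_apply_ιMulti,
    Function.update_self, funext fun i => (Pi.basisFun_apply R (Fin n) i).symm,
    Module.Basis.det_self, smul_eq_mul, mul_one, Pi.basisFun_det_apply] at this

def finAddSumEquiv (g r : ℕ) : Fin (g + r) ≃ Fin r ⊕ Fin g :=
  (finCongr (Nat.add_comm g r)).trans finSumFinEquiv.symm

theorem ExteriorAlgebra.prod_ofFn_ι_mul_prod_ofFn_ι {R M : Type*} [CommRing R] [AddCommGroup M]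
    [Module R M] {r g : ℕ} (a : Fin r → M) (b : Fin g → M) :
    (List.ofFn fun i => ι R (a i)).prod * (List.ofFn fun i => ι R (b i)).prod =
      ιMulti R (g + r) (Sum.elim a b ∘ finAddSumEquiv g r) := by
  rw [ιMulti_apply, List.ofFn_congr (Nat.add_comm g r), List.ofFn_add, List.prod_append]
  have hl (i : Fin r) : finAddSumEquiv g r (Fin.cast (Nat.add_comm g r).symm
      (Fin.castLE (Nat.le_add_right r g) i)) = .inl i := by
    simp [finAddSumEquiv, Equiv.symm_apply_eq, Fin.ext_iff]
  have hr (j : Fin g) : finAddSumEquiv g r (Fin.cast (Nat.add_comm g r).symm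
      (Fin.natAdd r j)) = .inr j := by
    simp [finAddSumEquiv]
  simp only [Function.comp_apply, hl, hr, Sum.elim_inl, Sum.elim_inr]

universe v in
theorem LinearMap.finrank_add_finrank_ker_of_surjective {R N : Type*} {M : Type v} [CommRing R]
    [StrongRankCondition R] [HasRankNullity.{v} R] [AddCommGroup M] [Module R M]
    [Module.Finite R M] [AddCommGroup N] [Module R N] {f : M →ₗ[R] N}
    (hf : Function.Surjective f) :
    Module.finrank R N + Module.finrank R (ker f) = Module.finrank R M := by
  rw [← (f.quotKerEquivOfSurjective hf).finrank_eq, Submodule.finrank_quotient_add_finrank]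

theorem linearIndependent_iff_finrank_baseChange_eq {R Q H ι κ : Type*} [CommRing R] [IsDomain R]
    [Field Q] [Algebra R Q] [IsFractionRing R Q] [AddCommGroup H] [Module R H] [Fintype ι]
    [Fintype κ] {pr : (ι → R) →ₗ[R] H} (hpr : Function.Surjective pr)
    {rel : κ → ι → R} (hker : LinearMap.ker pr = Submodule.span R (Set.range rel)) {g : ℕ}
    (hg : Fintype.card ι = g + Fintype.card κ) :
    LinearIndependent R rel ↔ Module.finrank Q (Q ⊗[R] H) = g := by
  have hnullity := LinearMap.finrank_add_finrank_ker_of_surjective hpr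
  rw [hker, Module.finrank_fintype_fun_eq_card] at hnullity
  rw [(TensorProduct.isBaseChange R H Q).finrank_eq, linearIndependent_iff_card_eq_finrank_span,
    Set.finrank]
  omega

open Module Submodule in
theorem exists_linearIndependent_sumElim_of_span_eq_top {K V : Type*} [Field K] [AddCommGroup V]
    [Module K V] [FiniteDimensional K V] {ι κ : Type*} [Fintype κ] {b : ι → V}
    (hb : span K (Set.range b) = ⊤) {v : κ → V} (hv : LinearIndependent K v) {g : ℕ}
    (hg : finrank K V = Fintype.card κ + g) :
    ∃ s : Fin g → ι, LinearIndependent K (Sum.elim v (b ∘ s)) := by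
  set W := span K (Set.range v)
  have hspan : span K (Set.range (W.mkQ ∘ b)) = ⊤ := by
    rw [Set.range_comp, ← Submodule.map_span, hb, Submodule.map_top, Submodule.range_mkQ]
  obtain ⟨κ', a, -, hspan', hind⟩ := exists_linearIndependent' K (W.mkQ ∘ b)
  rw [hspan] at hspan'
  let B : Basis κ' K (V ⧸ W) := .mk hind hspan'.ge
  have : Finite κ' := Module.Finite.finite_basis B
  have hcard : Nat.card κ' = g := by
    have := W.finrank_quotient_add_finrank
    rw [finrank_span_eq_card hv, finrank_eq_nat_card_basis B] at this
    omega
  obtain ⟨e⟩ : Nonempty (Fin g ≃ κ') := ⟨(Finite.equivFinOfCardEq hcard).symm⟩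
  exact ⟨a ∘ e, LinearIndependent.sumElim_of_quotient (M' := W)
    (f := fun i => ⟨v i, subset_span ⟨i, rfl⟩⟩) (.of_comp W.subtype hv) _
    (hind.comp e e.injective)⟩

theorem Matrix.det_ne_zero_of_linearIndependent_rows {R m : Type*} [CommRing R] [IsDomain R]
    [Fintype m] [DecidableEq m] {A : Matrix m m R} (hA : LinearIndependent R A.row) :
    A.det ≠ 0 := by
  have hAK : IsUnit (A.map (algebraMap R (FractionRing R))) := by
    rw [← Matrix.linearIndependent_rows_iff_isUnit]
    exact (linearIndependent_algebraMap_comp_iff (v := A.row)).mpr hA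
  rw [Matrix.isUnit_iff_isUnit_det, ← RingHom.mapMatrix_apply, ← RingHom.map_det] at hAK
  exact fun h => hAK.ne_zero (by rw [h, map_zero])

theorem exists_det_sumElim_single_ne_zero {R : Type*} [CommRing R] [IsDomain R] {g r : ℕ}
    {rel : Fin r → Fin (g + r) → R} (hrel : LinearIndependent R rel) :
    ∃ s : Fin g → Fin (g + r),
      (Matrix.of (Sum.elim rel (fun i => Pi.single (s i) 1) ∘ finAddSumEquiv g r)).det ≠ 0 := by
  obtain ⟨s, hs⟩ := exists_linearIndependent_sumElim_of_span_eq_top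
    (Pi.basisFun (FractionRing R) (Fin (g + r))).span_eq
    ((linearIndependent_algebraMap_comp_iff (S := FractionRing R)).mpr hrel) (g := g)
    (by simp [add_comm])
  have hsingle : Sum.elim (fun i => algebraMap R (FractionRing R) ∘ rel i)
      (Pi.basisFun (FractionRing R) (Fin (g + r)) ∘ s) =
      fun j => algebraMap R (FractionRing R) ∘ Sum.elim rel (fun i => Pi.single (s i) 1) j := by
    funext j k
    cases j <;> simp [Pi.single_apply, apply_ite]
  rw [hsingle, linearIndependent_algebraMap_comp_iff] at hs
  exact ⟨s, Matrix.det_ne_zero_of_linearIndependent_rows ((linearIndependent_equiv _).mpr hs)⟩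

theorem stmt15_general (R : Type) [CommRing R] [IsDomain R]
    (Q : Type) [Field Q] [Algebra R Q] [IsFractionRing R Q]
    (H : Type) [AddCommGroup H] [Module R H]
    (g r : ℕ)
    -- a presentation `⟨γ₁,…,γ_{g+r} | rel₁,…,rel_r⟩` of `H` of deficiency `g`:
    (pr : (Fin (g + r) → R) →ₗ[R] H) (hpr : Function.Surjective pr)
    (rel : Fin r → (Fin (g + r) → R))
    (hker : LinearMap.ker pr = Submodule.span R (Set.range rel))
    -- the Alexander function `𝒜 : Λ^g H → R` of this presentation:
    (Alex : (Fin g → H) → R)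
    (hAlex : ∀ (u : Fin g → H) (lift : Fin g → (Fin (g + r) → R)),
      (∀ i, pr (lift i) = u i) →
      (List.ofFn fun i => ExteriorAlgebra.ι R (rel i)).prod *
          (List.ofFn fun i => ExteriorAlgebra.ι R (lift i)).prod =
        Alex u • (List.ofFn fun i : Fin (g + r) =>
          ExteriorAlgebra.ι R (Pi.single i (1 : R))).prod) :
    (Module.finrank Q (Q ⊗[R] H) = g → ∃ y : Fin g → H, Alex y ≠ 0) ∧
    (Module.finrank Q (Q ⊗[R] H) ≠ g → ∀ y : Fin g → H, Alex y = 0) := by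
  have hAlex_det (u : Fin g → H) (lift : Fin g → Fin (g + r) → R)
      (hlift : ∀ i, pr (lift i) = u i) :
      Alex u = (Matrix.of (Sum.elim rel lift ∘ finAddSumEquiv g r)).det :=
    (ExteriorAlgebra.det_eq_of_ιMulti_eq_smul (by
      rw [← ExteriorAlgebra.prod_ofFn_ι_mul_prod_ofFn_ι, hAlex u lift hlift,
        ExteriorAlgebra.ιMulti_apply])).symm
  have hrank := linearIndependent_iff_finrank_baseChange_eq (Q := Q) hpr hker (g := g) (by simp)
  refine ⟨fun hdim => ?_, fun hdim y => ?_⟩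
  · obtain ⟨s, hs⟩ := exists_det_sumElim_single_ne_zero (hrank.mpr hdim)
    exact ⟨_, (hAlex_det _ _ fun i => rfl).trans_ne hs⟩
  · choose lift hlift using fun i => hpr (y i)
    rw [hAlex_det y lift hlift]
    refine Matrix.det_eq_zero_of_not_linearIndependent_rows fun h => hdim (hrank.mp
      (((linearIndependent_equiv _).mp h).comp _ Sum.inl_injective))

/-- nontriviality of the Alexander function.  For a module `H` with a
presentation of deficiency `g` and Alexander function `𝒜`, one has `𝒜 ≠ 0` if
`dim_Q(Q ⊗_R H) = g`, and `𝒜 = 0` if `dim_Q(Q ⊗_R H) ≠ g`. -/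
theorem stmt15 (R : Type) [CommRing R] [IsDomain R]
    (Q : Type) [Field Q] [Algebra R Q] [IsFractionRing R Q]
    (H : Type) [AddCommGroup H] [Module R H] [Module.Finite R H]
    (g r : ℕ)
    -- a presentation `⟨γ₁,…,γ_{g+r} | rel₁,…,rel_r⟩` of `H` of deficiency `g`:
    (pr : (Fin (g + r) → R) →ₗ[R] H) (hpr : Function.Surjective pr)
    (rel : Fin r → (Fin (g + r) → R))
    (hker : LinearMap.ker pr = Submodule.span R (Set.range rel))
    -- the Alexander function `𝒜 : Λ^g H → R` of this presentation:
    (Alex : (Fin g → H) → R)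
    (hAlex : ∀ (u : Fin g → H) (lift : Fin g → (Fin (g + r) → R)),
      (∀ i, pr (lift i) = u i) →
      (List.ofFn fun i => ExteriorAlgebra.ι R (rel i)).prod *
          (List.ofFn fun i => ExteriorAlgebra.ι R (lift i)).prod =
        Alex u • (List.ofFn fun i : Fin (g + r) =>
          ExteriorAlgebra.ι R (Pi.single i (1 : R))).prod) :
    (Module.finrank Q (Q ⊗[R] H) = g → ∃ y : Fin g → H, Alex y ≠ 0) ∧
    (Module.finrank Q (Q ⊗[R] H) ≠ g → ∀ y : Fin g → H, Alex y = 0) :=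
  stmt15_general R Q H g r pr hpr rel hker Alex hAlex
end

section
/- Let Q be a field with involution and let H₁, H₂, H₃ be finite-dimensional Q-vector spaces with nondegenerate skew-Hermitian forms ρ₁, ρ₂, ρ₃. Let N₁ ⊆ H₁ ⊕ H₂ and N₂ ⊆ H₂ ⊕ H₃ be Lagrangian subspaces with respect to (−ρ₁)⊕ρ₂ and (−ρ₂)⊕ρ₃ respectively. Then the relational composition N₂ ∘ N₁ = {(h₁,h₃) : ∃h₂ ∈ H₂, (h₁,h₂) ∈ N₁, (h₂,h₃) ∈ N₂} is a Lagrangian subspace of (H₁ ⊕ H₃, (−ρ₁)⊕ρ₃). -/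
/-!
Over a field, the annihilator of a subspace of a nondegenerate skew-Hermitian space has
complementary dimension, so `Ann (Ann W) = W` and `Ann (U ⊓ W) = Ann U ⊔ Ann W`.
In `(H₁ × H₂) × (H₂ × H₃)` with the form `(-ρ₁ ⊕ ρ₂) ⊕ (-ρ₂ ⊕ ρ₃)`, let `D` be the subspace of the
vectors `((0, h), (h, 0))`; its annihilator is `{z | z.1.2 = z.2.1}`. If `x` annihilates the
composite `N₂ ∘ N₁`, then `((x₁, 0), (0, x₂))` annihilates `(N₁ × N₂) ⊓ Ann D`, hence lies in
`Ann (N₁ × N₂) ⊔ Ann (Ann D) = N₁ × N₂ ⊔ D`, and its `D`-component `((0, h), (h, 0))` yields the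
middle point `-h` witnessing `x ∈ N₂ ∘ N₁`.
-/

namespace SHForm

section CommRing

variable {R : Type} [CommRing R] {σ : R →+* R}
variable {H : Type} [AddCommGroup H] [Module R H]

def toSesq (ρ : SHForm R σ H) : H →ₗ[R] H →ₛₗ[σ] R :=
  LinearMap.mk₂'ₛₗ (RingHom.id R) σ ρ.form ρ.add_left ρ.smul_left ρ.add_right ρ.smul_right

@[simp]
theorem toSesq_apply (ρ : SHForm R σ H) (x y : H) : ρ.toSesq x y = ρ.form x y := rfl

@[simp]
theorem zero_left (ρ : SHForm R σ H) (y : H) : ρ.form 0 y = 0 := by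
  simpa using ρ.smul_left 0 0 y

@[simp]
theorem zero_right (ρ : SHForm R σ H) (x : H) : ρ.form x 0 = 0 := by
  simpa using ρ.smul_right 0 x 0

theorem sub_left (ρ : SHForm R σ H) (x x' y : H) :
    ρ.form (x - x') y = ρ.form x y - ρ.form x' y := by
  simp only [← toSesq_apply, map_sub, LinearMap.sub_apply]

theorem form_eq_zero_swap (ρ : SHForm R σ H) {x y : H} (h : ρ.form x y = 0) :
    ρ.form y x = 0 := by
  rw [ρ.skew, h, map_zero, neg_zero]

instance : Neg (SHForm R σ H) where
  neg ρ :=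
    { form := fun x y => -ρ.form x y
      add_left := fun x x' y => by rw [ρ.add_left, neg_add]
      smul_left := fun r x y => by rw [ρ.smul_left, mul_neg]
      add_right := fun x y y' => by rw [ρ.add_right, neg_add]
      smul_right := fun r x y => by rw [ρ.smul_right, mul_neg]
      skew := fun x y => by rw [ρ.skew x y, map_neg]
      nondeg := fun x h => ρ.nondeg x fun y => neg_eq_zero.mp (h y) }

@[simp]
theorem neg_form (ρ : SHForm R σ H) (x y : H) : (-ρ).form x y = -ρ.form x y := rfl

def prod {H' : Type} [AddCommGroup H'] [Module R H'] (ρ : SHForm R σ H) (ρ' : SHForm R σ H') :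
    SHForm R σ (H × H') where
  form x y := ρ.form x.1 y.1 + ρ'.form x.2 y.2
  add_left x x' y := by simp only [Prod.fst_add, Prod.snd_add, ρ.add_left, ρ'.add_left]; ring
  smul_left r x y := by simp only [Prod.smul_fst, Prod.smul_snd, ρ.smul_left, ρ'.smul_left]; ring
  add_right x y y' := by simp only [Prod.fst_add, Prod.snd_add, ρ.add_right, ρ'.add_right]; ring
  smul_right r x y := by
    simp only [Prod.smul_fst, Prod.smul_snd, ρ.smul_right, ρ'.smul_right]; ring
  skew x y := by rw [ρ.skew x.1, ρ'.skew x.2, map_add, neg_add]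
  nondeg x h := Prod.ext
    (ρ.nondeg x.1 fun y => by simpa using h (y, 0))
    (ρ'.nondeg x.2 fun y => by simpa using h (0, y))

@[simp]
theorem prod_form {H' : Type} [AddCommGroup H'] [Module R H'] (ρ : SHForm R σ H)
    (ρ' : SHForm R σ H') (x y : H × H') :
    (ρ.prod ρ').form x y = ρ.form x.1 y.1 + ρ'.form x.2 y.2 := rfl

def annih (ρ : SHForm R σ H) (W : Submodule R H) : Submodule R H where
  carrier := {x | ∀ w ∈ W, ρ.form x w = 0}
  add_mem' ha hb w hw := by rw [ρ.add_left, ha w hw, hb w hw, add_zero]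
  zero_mem' w _ := ρ.zero_left w
  smul_mem' r x hx w hw := by rw [ρ.smul_left, hx w hw, mul_zero]

def IsLagrangian (ρ : SHForm R σ H) (L : Submodule R H) : Prop := ρ.annih L = L

theorem le_annih_annih (ρ : SHForm R σ H) (W : Submodule R H) : W ≤ ρ.annih (ρ.annih W) :=
  fun x hx _ ha => ρ.form_eq_zero_swap (ha x hx)

theorem annih_sup (ρ : SHForm R σ H) (U W : Submodule R H) :
    ρ.annih (U ⊔ W) = ρ.annih U ⊓ ρ.annih W := by
  refine le_antisymm (fun x hx => ⟨fun u hu => hx u (Submodule.mem_sup_left hu),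
    fun w hw => hx w (Submodule.mem_sup_right hw)⟩) ?_
  rintro x ⟨hU, hW⟩ _ hv
  obtain ⟨u, hu, w, hw, rfl⟩ := Submodule.mem_sup.mp hv
  rw [ρ.add_right, hU u hu, hW w hw, add_zero]

theorem annih_top (ρ : SHForm R σ H) : ρ.annih ⊤ = ⊥ :=
  eq_bot_iff.mpr fun x hx => ρ.nondeg x fun y => hx y trivial

theorem annih_prod {H' : Type} [AddCommGroup H'] [Module R H'] (ρ : SHForm R σ H)
    (ρ' : SHForm R σ H') (W : Submodule R H) (W' : Submodule R H') :
    (ρ.prod ρ').annih (W.prod W') = (ρ.annih W).prod (ρ'.annih W') := by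
  ext x
  refine ⟨fun hx => ⟨fun w hw => ?_, fun w hw => ?_⟩, fun ⟨hx, hx'⟩ y ⟨hy, hy'⟩ => ?_⟩
  · simpa using hx (w, 0) ⟨hw, W'.zero_mem⟩
  · simpa using hx (0, w) ⟨W.zero_mem, hw⟩
  · rw [prod_form, hx y.1 hy, hx' y.2 hy', add_zero]

end CommRing

section Field

variable {Q : Type} [Field Q] {σ : Q →+* Q}
variable {H : Type} [AddCommGroup H] [Module Q H] [FiniteDimensional Q H]

open Module

/-- The annihilator of `W` is cut out by the linear functionals `ρ(·, bᵢ)` for a basis `b` of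
`W`, so it has codimension at most `dim W`. -/
theorem finrank_le_finrank_annih_add (ρ : SHForm Q σ H) (W : Submodule Q H) :
    finrank Q H ≤ finrank Q (ρ.annih W) + finrank Q W := by
  let b := finBasis Q W
  let Ψ : H →ₗ[Q] Fin (finrank Q W) → Q := LinearMap.pi fun i => ρ.toSesq.flip (b i)
  have hker : LinearMap.ker Ψ ≤ ρ.annih W := fun x hx w hw => by
    have hres : (ρ.toSesq x).domRestrict W = 0 :=
      b.ext fun i => by simpa [Ψ] using congr_fun (LinearMap.mem_ker.mp hx) i
    simpa using LinearMap.congr_fun hres ⟨w, hw⟩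
  calc finrank Q H = finrank Q (LinearMap.range Ψ) + finrank Q (LinearMap.ker Ψ) :=
        (LinearMap.finrank_range_add_finrank_ker Ψ).symm
    _ ≤ finrank Q W + finrank Q (ρ.annih W) := by
        gcongr
        · simpa using Submodule.finrank_le (LinearMap.range Ψ)
        · exact Submodule.finrank_mono hker
    _ = _ := add_comm _ _

/-- The lower bound for `W` and for a complement `W'` add up to `dim H`, while
`annih W ⊓ annih W' = annih ⊤ = 0` bounds the sum from above. -/
theorem finrank_annih_add_finrank (ρ : SHForm Q σ H) (W : Submodule Q H) :
    finrank Q (ρ.annih W) + finrank Q W = finrank Q H := by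
  obtain ⟨W', hW'⟩ := W.exists_isCompl
  have hinf : ρ.annih W ⊓ ρ.annih W' = ⊥ := by
    rw [← annih_sup, hW'.sup_eq_top, annih_top]
  have hsum := Submodule.finrank_sup_add_finrank_inf_eq (ρ.annih W) (ρ.annih W')
  rw [hinf, finrank_bot] at hsum
  have := Submodule.finrank_add_eq_of_isCompl hW'
  have := Submodule.finrank_le (ρ.annih W ⊔ ρ.annih W')
  have := ρ.finrank_le_finrank_annih_add W
  have := ρ.finrank_le_finrank_annih_add W'
  omega

theorem annih_annih (ρ : SHForm Q σ H) (W : Submodule Q H) : ρ.annih (ρ.annih W) = W := by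
  refine (Submodule.eq_of_le_of_finrank_le (ρ.le_annih_annih W) ?_).symm
  have := ρ.finrank_annih_add_finrank W
  have := ρ.finrank_annih_add_finrank (ρ.annih W)
  omega

theorem annih_inf (ρ : SHForm Q σ H) (U W : Submodule Q H) :
    ρ.annih (U ⊓ W) = ρ.annih U ⊔ ρ.annih W := by
  conv_lhs => rw [← ρ.annih_annih U, ← ρ.annih_annih W, ← annih_sup]
  exact ρ.annih_annih _

end Field

end SHForm

namespace Submodule

variable {R : Type} [CommRing R] {A B C : Type}
variable [AddCommGroup A] [Module R A] [AddCommGroup B] [Module R B] [AddCommGroup C] [Module R C]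

def relComp (N₁ : Submodule R (A × B)) (N₂ : Submodule R (B × C)) : Submodule R (A × C) where
  carrier := {x | ∃ b, (x.1, b) ∈ N₁ ∧ (b, x.2) ∈ N₂}
  add_mem' := fun ⟨b, h₁, h₂⟩ ⟨b', h₁', h₂'⟩ => ⟨b + b', N₁.add_mem h₁ h₁', N₂.add_mem h₂ h₂'⟩
  zero_mem' := ⟨0, N₁.zero_mem, N₂.zero_mem⟩
  smul_mem' r _ := fun ⟨b, h₁, h₂⟩ => ⟨r • b, N₁.smul_mem r h₁, N₂.smul_mem r h₂⟩

end Submodule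

namespace SHForm.IsLagrangian

section CommRing

variable {R : Type} [CommRing R] {σ : R →+* R} {A B C : Type}
variable [AddCommGroup A] [Module R A] [AddCommGroup B] [Module R B] [AddCommGroup C] [Module R C]
variable {α : SHForm R σ A} {β : SHForm R σ B} {γ : SHForm R σ C}
variable {N₁ : Submodule R (A × B)} {N₂ : Submodule R (B × C)}

theorem relComp_le_annih (h₁ : ((-α).prod β).IsLagrangian N₁)
    (h₂ : ((-β).prod γ).IsLagrangian N₂) :
    N₁.relComp N₂ ≤ ((-α).prod γ).annih (N₁.relComp N₂) := by
  rintro x ⟨b, hx₁, hx₂⟩ y ⟨b', hy₁, hy₂⟩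
  have e₁ := h₁.ge hx₁ _ hy₁
  have e₂ := h₂.ge hx₂ _ hy₂
  simp only [prod_form, neg_form] at e₁ e₂ ⊢
  linear_combination e₁ + e₂

end CommRing

section Field

variable {Q : Type} [Field Q] {σ : Q →+* Q} {A B C : Type}
variable [AddCommGroup A] [Module Q A] [FiniteDimensional Q A]
variable [AddCommGroup B] [Module Q B] [FiniteDimensional Q B]
variable [AddCommGroup C] [Module Q C] [FiniteDimensional Q C]
variable {α : SHForm Q σ A} {β : SHForm Q σ B} {γ : SHForm Q σ C}
variable {N₁ : Submodule Q (A × B)} {N₂ : Submodule Q (B × C)}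

theorem relComp (h₁ : ((-α).prod β).IsLagrangian N₁) (h₂ : ((-β).prod γ).IsLagrangian N₂) :
    ((-α).prod γ).IsLagrangian (N₁.relComp N₂) := by
  refine le_antisymm (fun x hx => ?_) (relComp_le_annih h₁ h₂)
  let Ω := ((-α).prod β).prod ((-β).prod γ)
  let D := LinearMap.range ((LinearMap.inr Q A B).prod (LinearMap.inl Q B C))
  have mem_annih_D {z : (A × B) × (B × C)} (hz : z ∈ Ω.annih D) : z.1.2 = z.2.1 := by
    refine sub_eq_zero.mp (β.nondeg _ fun b => ?_)
    have := hz _ ⟨b, rfl⟩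
    simp only [Ω, prod_form, neg_form] at this
    simp only [β.sub_left]
    simpa [sub_eq_add_neg, add_comm] using this
  have hx' : ((x.1, 0), (0, x.2)) ∈ Ω.annih (N₁.prod N₂ ⊓ Ω.annih D) := by
    rintro z ⟨⟨hz₁, hz₂⟩, hzD⟩
    have := hx (z.1.1, z.2.2) ⟨z.1.2, hz₁, mem_annih_D hzD ▸ hz₂⟩
    simpa [Ω] using this
  rw [annih_inf, annih_prod, h₁, h₂, annih_annih] at hx'
  obtain ⟨u, ⟨hu₁, hu₂⟩, _, ⟨b, rfl⟩, hsum⟩ := Submodule.mem_sup.mp hx'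
  have hu : u = ((x.1, -b), (-b, x.2)) := by
    rw [eq_sub_of_add_eq hsum]
    simp
  rw [hu] at hu₁ hu₂
  exact ⟨-b, hu₁, hu₂⟩

end Field

end SHForm.IsLagrangian

theorem stmt18_general (Q : Type) [Field Q] (σ : Q →+* Q)
    (H₁ H₂ H₃ : Type)
    [AddCommGroup H₁] [Module Q H₁] [FiniteDimensional Q H₁]
    [AddCommGroup H₂] [Module Q H₂] [FiniteDimensional Q H₂]
    [AddCommGroup H₃] [Module Q H₃] [FiniteDimensional Q H₃]
    (ρ₁ : SHForm Q σ H₁) (ρ₂ : SHForm Q σ H₂) (ρ₃ : SHForm Q σ H₃)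
    (N₁ : Submodule Q (H₁ × H₂)) (N₂ : Submodule Q (H₂ × H₃))
    (hN₁ : ∀ x : H₁ × H₂, x ∈ N₁ ↔ ∀ y ∈ N₁, - ρ₁.form x.1 y.1 + ρ₂.form x.2 y.2 = 0)
    (hN₂ : ∀ x : H₂ × H₃, x ∈ N₂ ↔ ∀ y ∈ N₂, - ρ₂.form x.1 y.1 + ρ₃.form x.2 y.2 = 0) :
    ∀ x : H₁ × H₃,
      (∃ h₂ : H₂, (x.1, h₂) ∈ N₁ ∧ (h₂, x.2) ∈ N₂) ↔
      (∀ y : H₁ × H₃, (∃ h₂ : H₂, (y.1, h₂) ∈ N₁ ∧ (h₂, y.2) ∈ N₂) →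
        - ρ₁.form x.1 y.1 + ρ₃.form x.2 y.2 = 0) := by
  have h₁ : ((-ρ₁).prod ρ₂).IsLagrangian N₁ := SetLike.ext fun x => (hN₁ x).symm
  have h₂ : ((-ρ₂).prod ρ₃).IsLagrangian N₂ := SetLike.ext fun x => (hN₂ x).symm
  exact fun x => (SetLike.ext_iff.mp (h₁.relComp h₂) x).symm

/-- over a field, the relational composition of two Lagrangian relations
between finite-dimensional nondegenerate skew-Hermitian spaces is Lagrangian. -/
theorem stmt18 (Q : Type) [Field Q] (σ : Q →+* Q) (hσ : ∀ q, σ (σ q) = q)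
    (H₁ H₂ H₃ : Type)
    [AddCommGroup H₁] [Module Q H₁] [FiniteDimensional Q H₁]
    [AddCommGroup H₂] [Module Q H₂] [FiniteDimensional Q H₂]
    [AddCommGroup H₃] [Module Q H₃] [FiniteDimensional Q H₃]
    (ρ₁ : SHForm Q σ H₁) (ρ₂ : SHForm Q σ H₂) (ρ₃ : SHForm Q σ H₃)
    (N₁ : Submodule Q (H₁ × H₂)) (N₂ : Submodule Q (H₂ × H₃))
    (hN₁ : ∀ x : H₁ × H₂, x ∈ N₁ ↔ ∀ y ∈ N₁, - ρ₁.form x.1 y.1 + ρ₂.form x.2 y.2 = 0)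
    (hN₂ : ∀ x : H₂ × H₃, x ∈ N₂ ↔ ∀ y ∈ N₂, - ρ₂.form x.1 y.1 + ρ₃.form x.2 y.2 = 0) :
    ∀ x : H₁ × H₃,
      (∃ h₂ : H₂, (x.1, h₂) ∈ N₁ ∧ (h₂, x.2) ∈ N₂) ↔
      (∀ y : H₁ × H₃, (∃ h₂ : H₂, (y.1, h₂) ∈ N₁ ∧ (h₂, y.2) ∈ N₂) →
        - ρ₁.form x.1 y.1 + ρ₃.form x.2 y.2 = 0) :=
  stmt18_general Q σ H₁ H₂ H₃ ρ₁ ρ₂ ρ₃ N₁ N₂ hN₁ hN₂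
end
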